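/- arXiv:1807.07372 — 3 statements merged into one kernel-verified Lean document; each statement's English description precedes it below -/
import Mathlib

section
/- Every tree is a contact B₀-VPG graph. -/
open SimpleGraph

/-- A horizontal grid segment on row `y`, spanning columns `a` to `b`. -/
def IsHorizSeg (S : Set (ℤ × ℤ)) : Prop :=
  ∃ y a b : ℤ, a ≤ b ∧ S = {p : ℤ × ℤ | p.2 = y ∧ a ≤ p.1 ∧ p.1 ≤ b}

/-- A vertical grid segment on column `x`, spanning rows `a` to `b`. -/
def IsVertSeg (S : Set (ℤ × ℤ)) : Prop :=
  ∃ x a b : ℤ, a ≤ b ∧ S = {p : ℤ × ℤ | p.1 = x ∧ a ≤ p.2 ∧ p.2 ≤ b}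

/-- A grid segment is a horizontal or vertical segment. -/
def IsGridSegment (S : Set (ℤ × ℤ)) : Prop := IsHorizSeg S ∨ IsVertSeg S

/-- `p` is an endpoint (extreme point) of the grid segment `S`. -/
def IsEndpointOf (p : ℤ × ℤ) (S : Set (ℤ × ℤ)) : Prop :=
  (∃ y a b : ℤ, a ≤ b ∧ S = {q : ℤ × ℤ | q.2 = y ∧ a ≤ q.1 ∧ q.1 ≤ b} ∧
      (p = (a, y) ∨ p = (b, y))) ∨
  (∃ x a b : ℤ, a ≤ b ∧ S = {q : ℤ × ℤ | q.1 = x ∧ a ≤ q.2 ∧ q.2 ≤ b} ∧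
      (p = (x, a) ∨ p = (x, b)))

/-- A contact B₀-VPG representation of a simple graph `G`. -/
structure ContactB0VPGRep {V : Type*} (G : SimpleGraph V) where
  seg : V → Set (ℤ × ℤ)
  isSeg : ∀ v : V, IsGridSegment (seg v)
  adj_iff : ∀ u v : V, u ≠ v → (G.Adj u v ↔ (seg u ∩ seg v).Nonempty)
  inter_subsingleton : ∀ u v : V, u ≠ v → (seg u ∩ seg v).Subsingleton
  contact : ∀ u v : V, u ≠ v → ∀ p ∈ seg u ∩ seg v,
    IsEndpointOf p (seg u) ∨ IsEndpointOf p (seg v)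

/-- A graph is contact B₀-VPG if it admits a contact B₀-VPG representation. -/
def ContactB0VPG {V : Type*} (G : SimpleGraph V) : Prop :=
  Nonempty (ContactB0VPGRep G)

/-- `G` is `H`-free: no induced subgraph of `G` is isomorphic to `H`. -/
def Free {V : Type*} {W : Type*} (G : SimpleGraph V) (H : SimpleGraph W) : Prop :=
  IsEmpty (H ↪g G)

/-- The complete graph `K₅`. -/
def K5 : SimpleGraph (Fin 5) := ⊤

/-- The complete bipartite graph `K₃,₃`. -/
def K33 : SimpleGraph (Fin 3 ⊕ Fin 3) := completeBipartiteGraph (Fin 3) (Fin 3)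

/-- The graph `K₄ − e`. -/
def K4e : SimpleGraph (Fin 4) := (⊤ : SimpleGraph (Fin 4)).deleteEdges {s(0, 1)}

/-- The graph `H₀`: three copies of `K₄` sharing exactly the common vertex `0`. -/
def H0 : SimpleGraph (Fin 10) :=
  SimpleGraph.fromRel (fun a b => a = 0 ∨ b = 0 ∨ (a.val - 1) / 3 = (b.val - 1) / 3)

/-- A graph is chordal if it has no induced cycle of length at least 4. -/
def Chordal {V : Type*} (G : SimpleGraph V) : Prop :=
  ∀ n : ℕ, 4 ≤ n → IsEmpty (cycleGraph n ↪g G)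

/-- In the representation `R`, `p` is a free endpoint of the segment of `v`. -/
def RepFreeEndpoint {V : Type*} {G : SimpleGraph V} (R : ContactB0VPGRep G)
    (v : V) (p : ℤ × ℤ) : Prop :=
  IsEndpointOf p (R.seg v) ∧ ∀ w : V, w ≠ v → p ∉ R.seg w

/-- `v` is internal: no contact B₀-VPG representation of `G` has a free endpoint of `P_v`. -/
def InternalVertex {V : Type*} (G : SimpleGraph V) (v : V) : Prop :=
  ∀ R : ContactB0VPGRep G, ¬ ∃ p : ℤ × ℤ, RepFreeEndpoint R v p

/-- The graph `G_T` built from a base tree `T`: each vertex `v` of `T` gets `3 - deg v`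
new pendant copies of `K₄` through `v`. -/
def GraphGT {V : Type*} [Fintype V] (T : SimpleGraph V) [DecidableRel T.Adj] :
    SimpleGraph (V ⊕ Σ v : V, Fin (3 - T.degree v) × Fin 3) :=
  SimpleGraph.fromRel (fun a b =>
    match a, b with
    | Sum.inl u, Sum.inl w => T.Adj u w
    | Sum.inl u, Sum.inr x => u = x.1
    | Sum.inr x, Sum.inl w => x.1 = w
    | Sum.inr x, Sum.inr y => x.1 = y.1 ∧ (x.2.1 : ℕ) = (y.2.1 : ℕ))

/-- A witness that `G` is (isomorphic to) a graph `G_T` for a base tree `T`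
with at least two vertices and maximum degree at most `d`. -/
structure BaseTreeWitness {W : Type*} (G : SimpleGraph W) (d : ℕ) where
  V : Type
  [instFin : Fintype V]
  T : SimpleGraph V
  [instDec : DecidableRel T.Adj]
  conn : T.Connected
  acyc : T.IsAcyclic
  two_le : 2 ≤ Fintype.card V
  maxdeg : ∀ v : V, T.degree v ≤ d
  iso : Nonempty (G ≃g GraphGT T)

/-- Membership in the family `𝒯`. -/
def InFamilyT {W : Type*} (G : SimpleGraph W) : Prop :=
  Nonempty (G ≃g H0) ∨ Nonempty (BaseTreeWitness G 3)

/-- Membership in the family `𝒯'` (base trees of maximum degree at most 2, plus `H₀`). -/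
def InFamilyT' {W : Type*} (G : SimpleGraph W) : Prop :=
  Nonempty (G ≃g H0) ∨ Nonempty (BaseTreeWitness G 2)

/-!
Root the tree at `r` and order the vertices lexicographically by their root paths, a depth-first
preorder; let `pre v` be the rank of `v` and `last v` the largest rank in the subtree of `v`, so
that the subtree of `w` fills the ranks `[pre w, last w]`. A vertex of even depth gets the
horizontal segment on row `pre v` over the columns `[pre (parent v), last v]`, a vertex of odd
depth the vertical segment on column `pre v` over the same rows. Segments of equal orientation
lie on distinct lines. A horizontal `u` and a vertical `w` can only meet at `(pre w, pre u)`, and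
only if each rank lies in the other's range; as subtree intervals are nested or disjoint, this
happens exactly when one is the parent of the other, and then the meeting point is the endpoint
of the child's segment on the parent's line.
-/

open Finset

namespace List

variable {α : Type*} [LinearOrder α]

-- Mathlib's `≤` on lists (`List.LE'`) is not syntactically core's, so core's `List.IsPrefix.le`
-- and `List.cons_le_cons_iff` do not apply to it directly.
theorem IsPrefix.le' {l₁ l₂ : List α} (h : l₁ <+: l₂) : l₁ ≤ l₂ := not_lt.mp h.le

theorem cons_le_cons_iff' {a b : α} {l₁ l₂ : List α} :
    a :: l₁ ≤ b :: l₂ ↔ a < b ∨ a = b ∧ l₁ ≤ l₂ := by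
  rw [← not_lt, ← not_lt, cons_lt_cons_iff]
  rcases lt_trichotomy a b with h | rfl | h
  · simp [h, h.not_gt, h.ne']
  · simp
  · simp [h, h.not_gt, h.ne']

theorem IsPrefix.of_le_of_le {l₁ l₂ l₃ : List α} (h : l₁ <+: l₃) (h₁₂ : l₁ ≤ l₂)
    (h₂₃ : l₂ ≤ l₃) : l₁ <+: l₂ := by
  obtain ⟨t, rfl⟩ := h
  induction l₁ generalizing l₂ with
  | nil => exact nil_prefix
  | cons a l₁ ih =>
    obtain _ | ⟨b, l₂⟩ := l₂
    · exact absurd h₁₂ (not_le.mpr (nil_lt_cons a l₁))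
    rw [cons_append, cons_le_cons_iff'] at h₂₃
    rw [cons_le_cons_iff'] at h₁₂
    obtain rfl : a = b :=
      le_antisymm (h₁₂.elim le_of_lt fun h => h.1.le) (h₂₃.elim le_of_lt fun h => h.1.le)
    simp only [lt_irrefl, true_and, false_or] at h₁₂ h₂₃
    exact cons_prefix_cons.mpr ⟨rfl, ih h₁₂ h₂₃⟩

end List

-- The separate `DecidableLT` instance lets this apply to lists, whose `<` is decided by core's
-- instance rather than by the linear order's.
theorem card_filter_lt_le_card_filter_lt_iff {ι α : Type*} [Fintype ι] [LinearOrder α]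
    [DecidableLT α] (f : ι → α) {a b : ι} :
    #{x | f x < f a} ≤ #{x | f x < f b} ↔ f a ≤ f b := by
  constructor
  · intro h
    by_contra! hba
    refine h.not_gt (card_lt_card ⟨fun x hx => ?_, fun hsub => ?_⟩)
    · simp only [mem_filter, mem_univ, true_and] at hx ⊢
      exact hx.trans hba
    · have := hsub (by simpa using hba)
      simp at this
  · intro hab
    exact card_le_card fun x hx => by
      simp only [mem_filter, mem_univ, true_and] at hx ⊢
      exact hx.trans_le hab

/-- A depth-first numbering of a rooted tree: `pre` numbers the vertices in preorder, `last v` is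
the largest number in the subtree of `v` and `horizontal` is the parity of the depth; the last
field says that `[pre w, last w]` contains only descendants of `w`. -/
structure TreeNumbering {V : Type*} (G : SimpleGraph V) where
  parent : V → V
  pre : V → ℤ
  last : V → ℤ
  horizontal : V → Bool
  pre_injective : Function.Injective pre
  pre_le_last : ∀ v, pre v ≤ last v
  pre_parent_le : ∀ v, pre (parent v) ≤ pre v
  last_le_last_parent : ∀ v, last v ≤ last (parent v)
  horizontal_parent_ne : ∀ v, parent v ≠ v → horizontal (parent v) ≠ horizontal v
  adj_iff : ∀ u v, G.Adj u v ↔ u ≠ v ∧ (parent u = v ∨ parent v = u)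
  pre_le_pre_parent :
    ∀ u w, pre w ≤ pre u → pre u ≤ last w → w ≠ u → pre w ≤ pre (parent u)

namespace TreeNumbering

variable {V : Type*} {G : SimpleGraph V} (N : TreeNumbering G)

def extent (v : V) : Set ℤ := Set.Icc (N.pre (N.parent v)) (N.last v)

theorem adj_iff_mem_extent {u w : V} (huw : u ≠ w) :
    G.Adj u w ↔ N.pre w ∈ N.extent u ∧ N.pre u ∈ N.extent w := by
  constructor
  · intro h
    rcases ((N.adj_iff u w).mp h).2 with rfl | rfl
    · exact ⟨⟨le_rfl, (N.pre_parent_le u).trans (N.pre_le_last u)⟩,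
        ⟨(N.pre_parent_le _).trans (N.pre_parent_le u),
          (N.pre_le_last u).trans (N.last_le_last_parent u)⟩⟩
    · exact ⟨⟨(N.pre_parent_le _).trans (N.pre_parent_le w),
          (N.pre_le_last w).trans (N.last_le_last_parent w)⟩,
        ⟨le_rfl, (N.pre_parent_le w).trans (N.pre_le_last w)⟩⟩
  · wlog hle : N.pre u ≤ N.pre w generalizing u w
    · intro h
      exact (this huw.symm (le_of_not_ge hle) h.symm).symm
    rintro ⟨⟨-, hwu⟩, ⟨hpw, -⟩⟩
    have hpar : N.parent w = u :=
      N.pre_injective ((N.pre_le_pre_parent w u hle hwu huw).antisymm' hpw)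
    exact (N.adj_iff u w).mpr ⟨huw, Or.inr hpar⟩

theorem horizontal_ne_of_adj {u w : V} (h : G.Adj u w) : N.horizontal u ≠ N.horizontal w := by
  obtain ⟨huw, rfl | rfl⟩ := (N.adj_iff u w).mp h
  · exact (N.horizontal_parent_ne u huw.symm).symm
  · exact N.horizontal_parent_ne w huw

def seg (v : V) : Set (ℤ × ℤ) :=
  if N.horizontal v then {p | p.2 = N.pre v ∧ p.1 ∈ N.extent v}
  else {p | p.1 = N.pre v ∧ p.2 ∈ N.extent v}

def crossing (u w : V) : ℤ × ℤ :=
  if N.horizontal u then (N.pre w, N.pre u) else (N.pre u, N.pre w)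

theorem isGridSegment_seg (v : V) : IsGridSegment (N.seg v) := by
  have hle : N.pre (N.parent v) ≤ N.last v := (N.pre_parent_le v).trans (N.pre_le_last v)
  unfold seg
  split
  · exact Or.inl ⟨_, _, _, hle, rfl⟩
  · exact Or.inr ⟨_, _, _, hle, rfl⟩

theorem isEndpointOf_crossing_parent (v : V) :
    IsEndpointOf (N.crossing v (N.parent v)) (N.seg v) := by
  have hle : N.pre (N.parent v) ≤ N.last v := (N.pre_parent_le v).trans (N.pre_le_last v)
  unfold seg crossing
  split
  · exact Or.inl ⟨_, _, _, hle, rfl, Or.inl rfl⟩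
  · exact Or.inr ⟨_, _, _, hle, rfl, Or.inl rfl⟩

theorem crossing_comm {u w : V} (h : N.horizontal u ≠ N.horizontal w) :
    N.crossing u w = N.crossing w u := by
  unfold crossing
  cases hu : N.horizontal u <;> cases hw : N.horizontal w <;> simp_all

theorem seg_inter_seg_of_horizontal {u w : V} (hu : N.horizontal u = true)
    (hw : N.horizontal w = false) :
    N.seg u ∩ N.seg w = {p | G.Adj u w ∧ p = N.crossing u w} := by
  have huw : u ≠ w := by rintro rfl; simp_all
  ext ⟨x, y⟩
  simp only [seg, crossing, hu, hw, N.adj_iff_mem_extent huw, Set.mem_inter_iff,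
    Set.mem_ofPred_eq, Prod.mk.injEq, if_true, Bool.false_eq_true, if_false]
  constructor
  · rintro ⟨⟨rfl, hx⟩, rfl, hy⟩
    exact ⟨⟨hx, hy⟩, rfl, rfl⟩
  · rintro ⟨⟨hx, hy⟩, rfl, rfl⟩
    exact ⟨⟨rfl, hx⟩, rfl, hy⟩

theorem seg_inter_seg_of_horizontal_eq {u w : V} (huw : u ≠ w)
    (h : N.horizontal u = N.horizontal w) : N.seg u ∩ N.seg w = ∅ := by
  refine Set.eq_empty_of_forall_notMem fun p ⟨hpu, hpw⟩ => huw (N.pre_injective ?_)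
  cases hb : N.horizontal u
  · simp only [seg, ← h, hb, Bool.false_eq_true, if_false, Set.mem_ofPred_eq] at hpu hpw
    exact hpu.1.symm.trans hpw.1
  · simp only [seg, ← h, hb, if_true, Set.mem_ofPred_eq] at hpu hpw
    exact hpu.1.symm.trans hpw.1

theorem seg_inter_seg {u w : V} (huw : u ≠ w) :
    N.seg u ∩ N.seg w = {p | G.Adj u w ∧ p = N.crossing u w} := by
  have of_eq (h : N.horizontal u = N.horizontal w) :
      N.seg u ∩ N.seg w = {p | G.Adj u w ∧ p = N.crossing u w} := by
    rw [N.seg_inter_seg_of_horizontal_eq huw h]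
    exact (Set.eq_empty_of_forall_notMem fun p hp => N.horizontal_ne_of_adj hp.1 h).symm
  cases hu : N.horizontal u <;> cases hw : N.horizontal w
  · exact of_eq (hu.trans hw.symm)
  · rw [Set.inter_comm, N.seg_inter_seg_of_horizontal hw hu, N.crossing_comm (by simp [hu, hw]),
      G.adj_comm]
  · exact N.seg_inter_seg_of_horizontal hu hw
  · exact of_eq (hu.trans hw.symm)

def toContactB0VPGRep : ContactB0VPGRep G where
  seg := N.seg
  isSeg := N.isGridSegment_seg
  adj_iff u w huw := by
    rw [N.seg_inter_seg huw]
    exact ⟨fun h => ⟨_, h, rfl⟩, fun ⟨_, h, _⟩ => h⟩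
  inter_subsingleton u w huw := by
    rw [N.seg_inter_seg huw]
    rintro p ⟨-, rfl⟩ q ⟨-, rfl⟩
    rfl
  contact u w huw p hp := by
    rw [N.seg_inter_seg huw] at hp
    obtain ⟨hadj, rfl⟩ := hp
    rcases ((N.adj_iff u w).mp hadj).2 with rfl | rfl
    · exact Or.inl (N.isEndpointOf_crossing_parent u)
    · rw [N.crossing_comm (N.horizontal_ne_of_adj hadj)]
      exact Or.inr (N.isEndpointOf_crossing_parent w)

end TreeNumbering

namespace SimpleGraph.IsTree

variable {V : Type*} {G : SimpleGraph V} (hG : G.IsTree) (r : V)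

noncomputable def rootPath (v : V) : G.Walk r v := (hG.existsUnique_path r v).exists.choose

theorem isPath_rootPath (v : V) : (hG.rootPath r v).IsPath :=
  (hG.existsUnique_path r v).exists.choose_spec

theorem eq_rootPath {v : V} {q : G.Walk r v} (hq : q.IsPath) : q = hG.rootPath r v :=
  (hG.existsUnique_path r v).unique hq (hG.isPath_rootPath r v)

noncomputable def parent (v : V) : V := (hG.rootPath r v).penultimate

noncomputable def lineage (v : V) : List V := (hG.rootPath r v).support

theorem parent_root : hG.parent r r = r := by
  rw [parent, ← hG.eq_rootPath r Walk.IsPath.nil]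
  rfl

theorem ne_root_of_parent_ne {v : V} (h : hG.parent r v ≠ v) : v ≠ r := by
  rintro rfl
  exact h (hG.parent_root _)

theorem adj_parent {v : V} (hv : v ≠ r) : G.Adj (hG.parent r v) v :=
  Walk.adj_penultimate (Walk.not_nil_of_ne hv.symm)

theorem adj_iff_parent {u v : V} :
    G.Adj u v ↔ u ≠ v ∧ (hG.parent r u = v ∨ hG.parent r v = u) := by
  have hpath := hG.isPath_rootPath r
  constructor
  · intro h
    refine ⟨h.ne, ?_⟩
    by_cases hu : u ∈ (hG.rootPath r v).support
    · exact Or.inr (hG.isAcyclic.eq_penultimate_of_adj_end (hpath v) h.symm hu).symm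
    · have hv := hG.isAcyclic.mem_support_of_ne_mem_support_of_adj_of_isPath
        (hpath u) (hpath v) h hu
      exact Or.inl (hG.isAcyclic.eq_penultimate_of_adj_end (hpath u) h hv).symm
  · rintro ⟨huv, rfl | rfl⟩
    · exact (hG.adj_parent r (hG.ne_root_of_parent_ne r (Ne.symm huv))).symm
    · exact hG.adj_parent r (hG.ne_root_of_parent_ne r huv)

theorem lineage_injective : Function.Injective (hG.lineage r) := fun u v h => by
  rw [← (hG.rootPath r u).getLast_support, ← (hG.rootPath r v).getLast_support]
  exact List.getLast_congr _ _ h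

theorem lineage_root_prefix (v : V) : hG.lineage r r <+: hG.lineage r v := by
  rw [lineage, ← hG.eq_rootPath r Walk.IsPath.nil]
  exact ⟨_, Walk.cons_tail_support _⟩

theorem lineage_of_ne_root {v : V} (hv : v ≠ r) :
    hG.lineage r v = hG.lineage r (hG.parent r v) ++ [v] := by
  rw [lineage, ← Walk.support_dropLast_concat (Walk.not_nil_of_ne hv.symm),
    hG.eq_rootPath r (hG.isPath_rootPath r v).dropLast]
  rfl

theorem lineage_parent_prefix (v : V) : hG.lineage r (hG.parent r v) <+: hG.lineage r v := by
  rcases eq_or_ne v r with rfl | hv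
  · rw [hG.parent_root]
  · rw [hG.lineage_of_ne_root r hv]
    exact List.prefix_append _ _

theorem lineage_prefix_parent {u w : V} (h : hG.lineage r w <+: hG.lineage r u) (hwu : w ≠ u) :
    hG.lineage r w <+: hG.lineage r (hG.parent r u) := by
  rcases eq_or_ne u r with rfl | hu
  · exact absurd
      (hG.lineage_injective u (h.sublist.antisymm (hG.lineage_root_prefix u w).sublist)) hwu
  · rw [hG.lineage_of_ne_root r hu, List.prefix_concat_iff] at h
    refine h.resolve_left fun h' => hwu (hG.lineage_injective r ?_)
    rw [h', hG.lineage_of_ne_root r hu]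

noncomputable def horizontal (v : V) : Bool := decide (Even (hG.lineage r v).length)

theorem horizontal_parent_ne {v : V} (h : hG.parent r v ≠ v) :
    hG.horizontal r (hG.parent r v) ≠ hG.horizontal r v := by
  simp only [horizontal, hG.lineage_of_ne_root r (hG.ne_root_of_parent_ne r h),
    List.length_append, List.length_singleton, Nat.even_add_one, decide_not]
  exact Bool.self_ne_not _

section Numbering

variable [Fintype V] [LinearOrder V]

noncomputable def pre (v : V) : ℤ := #{u | hG.lineage r u < hG.lineage r v}

noncomputable def last (w : V) : ℤ :=
  ({x | hG.lineage r w <+: hG.lineage r x} : Finset V).sup' ⟨w, by simp⟩ (hG.pre r)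

theorem pre_le_pre_iff {u v : V} :
    hG.pre r u ≤ hG.pre r v ↔ hG.lineage r u ≤ hG.lineage r v := by
  rw [pre, pre, Nat.cast_le]
  exact card_filter_lt_le_card_filter_lt_iff (hG.lineage r)

theorem pre_le_pre_of_prefix {u v : V} (h : hG.lineage r u <+: hG.lineage r v) :
    hG.pre r u ≤ hG.pre r v :=
  (hG.pre_le_pre_iff r).mpr h.le'

theorem pre_injective : Function.Injective (hG.pre r) := fun _ _ h =>
  hG.lineage_injective r
    (((hG.pre_le_pre_iff r).mp h.le).antisymm ((hG.pre_le_pre_iff r).mp h.ge))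

theorem pre_le_last (v : V) : hG.pre r v ≤ hG.last r v :=
  le_sup' (hG.pre r) (by simp)

theorem last_le_last_parent (v : V) : hG.last r v ≤ hG.last r (hG.parent r v) :=
  sup'_mono _ (fun x hx => by
    simpa using (hG.lineage_parent_prefix r v).trans (by simpa using hx)) _

theorem exists_pre_eq_last (w : V) :
    ∃ x, hG.lineage r w <+: hG.lineage r x ∧ hG.pre r x = hG.last r w := by
  obtain ⟨x, hx, hxl⟩ := exists_mem_eq_sup' (s := {x | hG.lineage r w <+: hG.lineage r x})
    ⟨w, by simp⟩ (hG.pre r)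
  exact ⟨x, by simpa using hx, hxl.symm⟩

theorem pre_le_pre_parent {u w : V} (hwu : hG.pre r w ≤ hG.pre r u)
    (hul : hG.pre r u ≤ hG.last r w) (hne : w ≠ u) :
    hG.pre r w ≤ hG.pre r (hG.parent r u) := by
  obtain ⟨x, hwx, hx⟩ := hG.exists_pre_eq_last r w
  have hwu' : hG.lineage r w <+: hG.lineage r u :=
    hwx.of_le_of_le ((hG.pre_le_pre_iff r).mp hwu)
      ((hG.pre_le_pre_iff r).mp (hul.trans_eq hx.symm))
  exact hG.pre_le_pre_of_prefix r (hG.lineage_prefix_parent r hwu' hne)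

noncomputable def treeNumbering : TreeNumbering G where
  parent := hG.parent r
  pre := hG.pre r
  last := hG.last r
  horizontal := hG.horizontal r
  pre_injective := hG.pre_injective r
  pre_le_last := hG.pre_le_last r
  pre_parent_le v := hG.pre_le_pre_of_prefix r (hG.lineage_parent_prefix r v)
  last_le_last_parent := hG.last_le_last_parent r
  horizontal_parent_ne _ := hG.horizontal_parent_ne r
  adj_iff _ _ := hG.adj_iff_parent r
  pre_le_pre_parent _ _ := hG.pre_le_pre_parent r

end Numbering

end SimpleGraph.IsTree

/-- Every tree is a contact B₀-VPG graph. -/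
theorem stmt_9 {V : Type*} [Fintype V] (G : SimpleGraph V)
    (hconn : G.Connected) (hacyc : G.IsAcyclic) : ContactB0VPG G := by
  let _ : LinearOrder V := LinearOrder.lift' _ (Fintype.equivFin V).injective
  obtain ⟨r⟩ := hconn.nonempty
  exact ⟨(IsTree.treeNumbering ⟨hconn, hacyc⟩ r).toContactB0VPGRep⟩
end

section
/- Let G be a tree-cograph that is contact B₀-VPG. Then every connected component of G is a tree, or is isomorphic to the complement of the path P₅ on 5 vertices, or is a contact B₀-VPG cograph. -/
open SimpleGraph

/-- The disjoint union of two simple graphs. -/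
def DisjUnion {V₁ V₂ : Type*} (G₁ : SimpleGraph V₁) (G₂ : SimpleGraph V₂) :
    SimpleGraph (V₁ ⊕ V₂) :=
  SimpleGraph.fromRel (fun a b =>
    match a, b with
    | Sum.inl u, Sum.inl w => G₁.Adj u w
    | Sum.inr u, Sum.inr w => G₂.Adj u w
    | _, _ => False)

/-- The class of tree-cographs: the smallest class of (finite) simple graphs containing all
trees, closed under disjoint unions, complements, and isomorphism. -/
inductive TreeCograph : ∀ {V : Type u}, SimpleGraph V → Prop
  | tree {V : Type u} [Fintype V] (G : SimpleGraph V) :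
      G.Connected → G.IsAcyclic → TreeCograph G
  | union {V₁ V₂ : Type u} {G₁ : SimpleGraph V₁} {G₂ : SimpleGraph V₂} :
      TreeCograph G₁ → TreeCograph G₂ → TreeCograph (DisjUnion G₁ G₂)
  | compl {V : Type u} {G : SimpleGraph V} : TreeCograph G → TreeCograph Gᶜ
  | iso {V W : Type u} {G : SimpleGraph V} {H : SimpleGraph W} :
      TreeCograph G → Nonempty (G ≃g H) → TreeCograph H

/-- `G` is an interval graph. -/
def IsIntervalGraph {V : Type*} (G : SimpleGraph V) : Prop :=
  ∃ f : V → ℝ × ℝ, (∀ v : V, (f v).1 ≤ (f v).2) ∧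
    ∀ u v : V, u ≠ v →
      (G.Adj u v ↔ (Set.Icc (f u).1 (f u).2 ∩ Set.Icc (f v).1 (f v).2).Nonempty)

/-- The set `A` induces a `P₄` in `G`. -/
def InducesP4 {V : Type*} (G : SimpleGraph V) (A : Set V) : Prop :=
  Nonempty (G.induce A ≃g pathGraph 4)

/-- `v` is a partner of the `P₄`-inducing set `A`. -/
def IsPartner {V : Type*} (G : SimpleGraph V) (A : Set V) (v : V) : Prop :=
  v ∉ A ∧ ∃ B₁ B₂ : Set V, B₁ ≠ B₂ ∧ B₁ ⊆ A ∪ {v} ∧ B₂ ⊆ A ∪ {v} ∧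
    InducesP4 G B₁ ∧ InducesP4 G B₂

/-- `G` is `P₄`-tidy: every vertex set inducing a `P₄` has at most one partner. -/
def P4Tidy {V : Type*} (G : SimpleGraph V) : Prop :=
  ∀ A : Set V, InducesP4 G A → ∀ v w : V, IsPartner G A v → IsPartner G A w → v = w

/-- The graph `G_{P₂}`: an edge `01` with two pendant `K₄`'s at `0`
(`{0,2,3,4}`, `{0,5,6,7}`) and two pendant `K₄`'s at `1` (`{1,8,9,10}`, `{1,11,12,13}`). -/
def GP2 : SimpleGraph (Fin 14) :=
  SimpleGraph.fromRel (fun a b =>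
    (a = 0 ∧ b = 1) ∨
    (a = 0 ∧ 2 ≤ b.val ∧ b.val ≤ 7) ∨
    (a = 1 ∧ 8 ≤ b.val) ∨
    (2 ≤ a.val ∧ 2 ≤ b.val ∧ (a.val - 2) / 3 = (b.val - 2) / 3))

/-- The graph `K₃,₃*`, obtained from `K₃,₃` (parts `{0,1,2}` and `{3,4,5}`) by
subdividing the edge `25` with the new vertex `6`. -/
def K33star : SimpleGraph (Fin 7) :=
  SimpleGraph.fromRel (fun a b =>
    (a.val ≤ 2 ∧ 3 ≤ b.val ∧ b.val ≤ 5 ∧ ¬(a = 2 ∧ b = 5)) ∨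
    (a = 6 ∧ (b = 2 ∨ b = 5)))

/-!
Contact B₀-VPG graphs contain no diamond `K₄ - e`: if `x` and `y` are both adjacent to the
adjacent vertices `u` and `w`, then `P_x` and `P_y` both pass through the contact point of `P_u`
and `P_w`, so `x` and `y` are adjacent. It therefore suffices to show that every component of a
tree-cograph is a tree, a co-`P₅`, a cograph, or contains a diamond, which we prove for `G` and
`Gᶜ` simultaneously by induction on the tree-cograph. The complement of a disjoint union of two
nonempty graphs is a join, in which an induced `P₄` on one side and any vertex of the other side
span a diamond. The complement of a tree `T` with an induced `P₄` is connected, and unless `T` is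
`P₄` (which is self-complementary) or `P₅`, `T` contains an induced `K₂ + 2K₁`, whose complement
is a diamond.
-/

open SimpleGraph

def HasDiamond {V : Type*} (G : SimpleGraph V) : Prop :=
  ∃ u w x y : V, G.Adj u w ∧ G.Adj x u ∧ G.Adj x w ∧ G.Adj y u ∧ G.Adj y w ∧
    x ≠ y ∧ ¬ G.Adj x y

section Geometry

theorem Set.median_mem_uIcc {α : Type*} [Lattice α] (a b c : α) :
    a ⊓ b ⊔ b ⊓ c ⊔ c ⊓ a ∈ Set.uIcc a b :=
  ⟨le_sup_left.trans le_sup_left,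
    sup_le (sup_le inf_le_sup (inf_le_left.trans le_sup_right)) (inf_le_right.trans le_sup_left)⟩

/-- The median of `p`, `q₁`, `q₂` lies in `U ∩ W`, hence equals `p`, and it lies in `X`. -/
theorem Set.mem_of_uIcc_subset_of_inter_subsingleton {α : Type*} [Lattice α] {X U W : Set α}
    (hX : ∀ x ∈ X, ∀ y ∈ X, Set.uIcc x y ⊆ X) (hU : ∀ x ∈ U, ∀ y ∈ U, Set.uIcc x y ⊆ U)
    (hW : ∀ x ∈ W, ∀ y ∈ W, Set.uIcc x y ⊆ W) (hUW : (U ∩ W).Subsingleton)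
    {p q₁ q₂ : α} (hp : p ∈ U ∩ W) (hq₁ : q₁ ∈ X ∩ U) (hq₂ : q₂ ∈ X ∩ W) : p ∈ X := by
  have hmU : p ⊓ q₁ ⊔ q₁ ⊓ q₂ ⊔ q₂ ⊓ p ∈ U := hU p hp.1 q₁ hq₁.2 (median_mem_uIcc p q₁ q₂)
  have hmX : p ⊓ q₁ ⊔ q₁ ⊓ q₂ ⊔ q₂ ⊓ p ∈ X :=
    hX q₁ hq₁.1 q₂ hq₂.1 (by convert median_mem_uIcc q₁ q₂ p using 1; ac_rfl)
  have hmW : p ⊓ q₁ ⊔ q₁ ⊓ q₂ ⊔ q₂ ⊓ p ∈ W :=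
    hW q₂ hq₂.2 p hp.2 (by convert median_mem_uIcc q₂ p q₁ using 1; ac_rfl)
  exact hUW hp ⟨hmU, hmW⟩ ▸ hmX

/-- In the product lattice `ℤ × ℤ`, `Set.uIcc x y` is the axis-parallel box spanned by `x` and
`y`. -/
theorem IsGridSegment.uIcc_subset {S : Set (ℤ × ℤ)} (hS : IsGridSegment S) :
    ∀ x ∈ S, ∀ y ∈ S, Set.uIcc x y ⊆ S := by
  rintro x hx y hy r ⟨hxr, hry⟩
  rw [Prod.le_def] at hxr hry
  simp only [Prod.fst_inf, Prod.snd_inf, Prod.fst_sup, Prod.snd_sup, inf_le_iff, le_sup_iff]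
    at hxr hry
  rcases hS with ⟨_, _, _, -, rfl⟩ | ⟨_, _, _, -, rfl⟩ <;>
  · simp only [Set.mem_ofPred_eq] at hx hy ⊢
    omega

variable {V W : Type*} {G : SimpleGraph V}

theorem ContactB0VPGRep.mem_seg_of_adj_of_adj (R : ContactB0VPGRep G) {u w x : V}
    (huw : G.Adj u w) (hxu : G.Adj x u) (hxw : G.Adj x w) {p : ℤ × ℤ}
    (hp : p ∈ R.seg u ∩ R.seg w) : p ∈ R.seg x := by
  obtain ⟨q₁, hq₁⟩ := (R.adj_iff x u hxu.ne).1 hxu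
  obtain ⟨q₂, hq₂⟩ := (R.adj_iff x w hxw.ne).1 hxw
  exact Set.mem_of_uIcc_subset_of_inter_subsingleton (IsGridSegment.uIcc_subset (R.isSeg x))
    (IsGridSegment.uIcc_subset (R.isSeg u)) (IsGridSegment.uIcc_subset (R.isSeg w))
    (R.inter_subsingleton u w huw.ne) hp hq₁ hq₂

theorem ContactB0VPG.not_hasDiamond (hc : ContactB0VPG G) : ¬ HasDiamond G := by
  rintro ⟨u, w, x, y, huw, hxu, hxw, hyu, hyw, hxy, hnxy⟩
  obtain ⟨R⟩ := hc
  obtain ⟨p, hp⟩ := (R.adj_iff u w huw.ne).1 huw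
  exact hnxy ((R.adj_iff x y hxy).2
    ⟨p, R.mem_seg_of_adj_of_adj huw hxu hxw hp, R.mem_seg_of_adj_of_adj huw hyu hyw hp⟩)

theorem ContactB0VPG.of_embedding {G' : SimpleGraph W} (f : G ↪g G') (hc : ContactB0VPG G') :
    ContactB0VPG G := by
  obtain ⟨R⟩ := hc
  exact ⟨⟨R.seg ∘ f, fun v => R.isSeg (f v),
    fun u v huv => f.map_adj_iff.symm.trans (R.adj_iff _ _ (f.injective.ne huv)),
    fun u v huv => R.inter_subsingleton _ _ (f.injective.ne huv),
    fun u v huv => R.contact _ _ (f.injective.ne huv)⟩⟩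

end Geometry

section Maps

variable {V W X : Type*} {G : SimpleGraph V} {G' : SimpleGraph W} {K : SimpleGraph X}

def SimpleGraph.Iso.compl (φ : G ≃g G') : Gᶜ ≃g G'ᶜ where
  toEquiv := φ.toEquiv
  map_rel_iff' := by simp [compl_adj, φ.map_adj_iff]

/-- The complement of the path `0 - 1 - 2 - 3` is the path `2 - 0 - 3 - 1`. -/
def pathGraphFourComplIso : (pathGraph 4)ᶜ ≃g pathGraph 4 where
  toFun := ![2, 0, 3, 1]
  invFun := ![1, 3, 0, 2]
  left_inv := by decide
  right_inv := by decide
  map_rel_iff' := by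
    intro a b
    fin_cases a <;> fin_cases b <;> simp [pathGraph_adj, compl_adj]

def SimpleGraph.pathGraphReverse (n : ℕ) : pathGraph n ≃g pathGraph n where
  toEquiv := Fin.revPerm
  map_rel_iff' := by
    intro i j
    simp only [Fin.revPerm_apply, pathGraph_adj, Fin.val_rev]
    omega

def SimpleGraph.Embedding.reverse {n : ℕ} (e : pathGraph n ↪g G) : pathGraph n ↪g G :=
  e.comp (pathGraphReverse n).toEmbedding

@[simp] theorem SimpleGraph.Embedding.reverse_apply {n : ℕ} (e : pathGraph n ↪g G) (i : Fin n) :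
    e.reverse i = e i.rev := rfl

@[simp] theorem SimpleGraph.Embedding.range_reverse {n : ℕ} (e : pathGraph n ↪g G) :
    Set.range e.reverse = Set.range e :=
  Fin.revPerm.surjective.range_comp e

def SimpleGraph.Embedding.pathGraphCons {n : ℕ} (e : pathGraph (n + 1) ↪g G) {v : V}
    (hv : v ∉ Set.range e) (hve : ∀ i, G.Adj v (e i) ↔ i = 0) : pathGraph (n + 2) ↪g G where
  toFun := Fin.cons v e
  inj' := Fin.cons_injective_iff.2 ⟨hv, e.injective⟩
  map_rel_iff' := by
    intro i j
    induction i using Fin.cases <;> induction j using Fin.cases <;>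
      simp only [Function.Embedding.coeFn_mk, Fin.cons_zero, Fin.cons_succ, G.adj_comm _ v, hve,
        G.irrefl, false_iff, e.map_adj_iff, pathGraph_adj, Fin.val_succ, Fin.val_zero,
        Fin.ext_iff] <;>
      omega

theorem SimpleGraph.Embedding.range_pathGraphCons {n : ℕ} (e : pathGraph (n + 1) ↪g G) {v : V}
    (hv : v ∉ Set.range e) (hve : ∀ i, G.Adj v (e i) ↔ i = 0) :
    Set.range (e.pathGraphCons hv hve) = insert v (Set.range e) :=
  Fin.range_cons v e

noncomputable def SimpleGraph.Embedding.induceImage (f : G ↪g G') (s : Set V) :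
    G.induce s ≃g G'.induce (f '' s) where
  toEquiv := Equiv.Set.image f s f.injective
  map_rel_iff' := by simp

def SimpleGraph.Iso.induceSupp (φ : G ≃g G') (c : G.ConnectedComponent) :
    G.induce c.supp ≃g G'.induce (φ.connectedComponentEquiv c).supp where
  toEquiv := ConnectedComponent.isoEquivSupp φ c
  map_rel_iff' := by simp [ConnectedComponent.isoEquivSupp, φ.map_adj_iff]

theorem SimpleGraph.Preconnected.supp_eq_univ (h : G.Preconnected) (c : G.ConnectedComponent) :
    c.supp = Set.univ :=
  Set.eq_univ_of_forall fun _ => h.subsingleton_connectedComponent.elim _ c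

theorem Free.of_embedding (f : G ↪g G') (h : _root_.Free G' K) : _root_.Free G K :=
  ⟨fun g => h.false (f.comp g)⟩

theorem Free.compl_pathGraph_four (h : _root_.Free G (pathGraph 4)) :
    _root_.Free Gᶜ (pathGraph 4) :=
  ⟨fun f => h.false (Embedding.complEquiv.symm (f.comp pathGraphFourComplIso.toEmbedding))⟩

theorem HasDiamond.of_embedding (f : G ↪g G') (h : HasDiamond G) : HasDiamond G' := by
  obtain ⟨u, w, x, y, huw, hxu, hxw, hyu, hyw, hxy, hnxy⟩ := h
  exact ⟨f u, f w, f x, f y, f.map_adj_iff.2 huw, f.map_adj_iff.2 hxu, f.map_adj_iff.2 hxw,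
    f.map_adj_iff.2 hyu, f.map_adj_iff.2 hyw, f.injective.ne hxy, fun h => hnxy (f.map_adj_iff.1 h)⟩

theorem hasDiamond_compl_of_adj {x y u w : V} (hxy : G.Adj x y)
    (hxu : x ≠ u) (hyu : y ≠ u) (hxw : x ≠ w) (hyw : y ≠ w) (huw : u ≠ w)
    (nux : ¬ G.Adj u x) (nuy : ¬ G.Adj u y) (nwx : ¬ G.Adj w x) (nwy : ¬ G.Adj w y)
    (nuw : ¬ G.Adj u w) : HasDiamond Gᶜ := by
  refine ⟨u, w, x, y, ?_, ?_, ?_, ?_, ?_, hxy.ne, fun h => (compl_adj G x y).1 h |>.2 hxy⟩ <;>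
    simp only [compl_adj, G.adj_comm x, G.adj_comm y] <;> tauto

end Maps

section Forest

variable {V : Type*} {G : SimpleGraph V}

theorem SimpleGraph.IsAcyclic.not_adj_of_isPath (hG : G.IsAcyclic) {u v : V} {p : G.Walk u v}
    (hp : p.IsPath) (hlen : p.length ≠ 1) : ¬ G.Adj u v := fun h =>
  hlen <| congrArg (fun q : G.Path u v => q.1.length)
    ((hG.subsingleton_path u v).elim ⟨p, hp⟩ (Path.singleton h))

theorem SimpleGraph.IsAcyclic.adj_iff_eq_zero_of_adj_zero (hG : G.IsAcyclic)
    (e : pathGraph 4 ↪g G) {z : V} (hz : z ∉ Set.range e) (h0 : G.Adj z (e 0)) (i : Fin 4) :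
    G.Adj z (e i) ↔ i = 0 := by
  have hz : ∀ i, e i ≠ z := fun i h => hz ⟨i, h⟩
  have h01 : G.Adj (e 0) (e 1) := by simp [pathGraph_adj]
  have h12 : G.Adj (e 1) (e 2) := by simp [pathGraph_adj]
  have h23 : G.Adj (e 2) (e 3) := by simp [pathGraph_adj]
  have h1 := hG.not_adj_of_isPath (p := .cons h0 (.cons h01 .nil))
    (by simp [Walk.isPath_def, Ne.symm (hz _)]) (by simp)
  have h2 := hG.not_adj_of_isPath (p := .cons h0 (.cons h01 (.cons h12 .nil)))
    (by simp [Walk.isPath_def, Ne.symm (hz _)]) (by simp)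
  have h3 := hG.not_adj_of_isPath (p := .cons h0 (.cons h01 (.cons h12 (.cons h23 .nil))))
    (by simp [Walk.isPath_def, Ne.symm (hz _)]) (by simp)
  fin_cases i <;> simp [h0, h1, h2, h3]

theorem SimpleGraph.IsAcyclic.not_adj_three_of_adj_zero (hG : G.IsAcyclic)
    (e : pathGraph 4 ↪g G) {z : V} (h0 : G.Adj z (e 0)) : ¬ G.Adj z (e 3) := by
  by_cases hz : z ∈ Set.range e
  · obtain ⟨i, rfl⟩ := hz
    fin_cases i <;> simp_all [pathGraph_adj]
  · simp [hG.adj_iff_eq_zero_of_adj_zero e hz h0]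

theorem SimpleGraph.IsAcyclic.compl_preconnected (hG : G.IsAcyclic) (e : pathGraph 4 ↪g G) :
    Gᶜ.Preconnected := by
  have hreach : ∀ z, Gᶜ.Reachable z (e 0) := by
    intro z
    by_cases h0 : G.Adj z (e 0)
    · have hz3 : Gᶜ.Adj z (e 3) :=
        (compl_adj G _ _).2
          ⟨by rintro rfl; simp [pathGraph_adj] at h0, hG.not_adj_three_of_adj_zero e h0⟩
      have h30 : Gᶜ.Adj (e 3) (e 0) := by simp [compl_adj, pathGraph_adj]
      exact hz3.reachable.trans h30.reachable
    · by_cases hz : z = e 0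
      · exact hz ▸ .rfl
      · exact ((compl_adj G _ _).2 ⟨hz, h0⟩).reachable
  exact fun u v => (hreach u).trans (hreach v).symm

theorem SimpleGraph.IsAcyclic.pendant_or_hasDiamond_compl (hG : G.IsAcyclic)
    (e : pathGraph 4 ↪g G) {z : V} (hz : z ∉ Set.range e) :
    (∀ i, G.Adj z (e i) ↔ i = 0) ∨ (∀ i, G.Adj z (e i) ↔ i = 3) ∨ HasDiamond Gᶜ := by
  by_cases h0 : G.Adj z (e 0)
  · exact Or.inl (hG.adj_iff_eq_zero_of_adj_zero e hz h0)
  by_cases h3 : G.Adj z (e 3)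
  · refine Or.inr (Or.inl fun i => ?_)
    simpa [Fin.rev_eq_iff] using
      hG.adj_iff_eq_zero_of_adj_zero e.reverse (by simpa using hz) (by simpa using h3) i.rev
  have hz : ∀ i, e i ≠ z := fun i h => hz ⟨i, h⟩
  refine Or.inr (Or.inr ?_)
  by_cases h2 : G.Adj z (e 2)
  · have h21 : G.Adj (e 2) (e 1) := by simp [pathGraph_adj]
    have h1 := hG.not_adj_of_isPath (p := .cons h2 (.cons h21 .nil))
      (by simp [Walk.isPath_def, Ne.symm (hz _)]) (by simp)
    exact hasDiamond_compl_of_adj (u := e 3) (by simp [pathGraph_adj]) (by simp) (by simp)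
      (hz 0) (hz 1) (hz 3) (by simp [pathGraph_adj]) (by simp [pathGraph_adj]) h0 h1
      (fun h => h3 h.symm)
  · exact hasDiamond_compl_of_adj (u := e 0) (by simp [pathGraph_adj]) (by simp) (by simp)
      (hz 2) (hz 3) (hz 0) (by simp [pathGraph_adj]) (by simp [pathGraph_adj]) h2 h3
      (fun h => h0 h.symm)

theorem SimpleGraph.IsAcyclic.nonempty_iso_pathGraph_five_or_hasDiamond_compl
    (hG : G.IsAcyclic) (e : pathGraph 4 ↪g G) {v : V} (hv : v ∉ Set.range e)
    (hve : ∀ i, G.Adj v (e i) ↔ i = 0) : Nonempty (G ≃g pathGraph 5) ∨ HasDiamond Gᶜ := by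
  let f := e.pathGraphCons hv hve
  by_cases hf : Function.Surjective f
  · exact Or.inl ⟨(RelIso.ofSurjective f hf).symm⟩
  obtain ⟨w, hw⟩ := not_forall.1 hf
  have hw : w ∉ insert v (Set.range e) :=
    e.range_pathGraphCons hv hve ▸ fun ⟨i, hi⟩ => hw ⟨i, hi⟩
  obtain ⟨hwv, hwe⟩ := not_or.1 (Set.mem_insert_iff.not.1 hw)
  have hv' : ∀ i, e i ≠ v := fun i h => hv ⟨i, h⟩
  have hw' : ∀ i, e i ≠ w := fun i h => hwe ⟨i, h⟩
  have h01 : G.Adj (e 0) (e 1) := by simp [pathGraph_adj]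
  have h12 : G.Adj (e 1) (e 2) := by simp [pathGraph_adj]
  have h23 : G.Adj (e 2) (e 3) := by simp [pathGraph_adj]
  have hv0 : G.Adj v (e 0) := (hve 0).2 rfl
  have of_not_adj (hw1 : ¬ G.Adj w (e 1)) (hw2 : ¬ G.Adj w (e 2)) (hvw : ¬ G.Adj v w) :
      HasDiamond Gᶜ :=
    hasDiamond_compl_of_adj h12 (hv' 1) (hv' 2) (hw' 1) (hw' 2) (Ne.symm hwv)
      (by simp [hve]) (by simp [hve]) hw1 hw2 hvw
  rcases hG.pendant_or_hasDiamond_compl e hwe with hw | hw | hD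
  · refine Or.inr (of_not_adj (by simp [hw]) (by simp [hw]) ?_)
    exact hG.not_adj_of_isPath (p := .cons hv0 (.cons ((hw 0).2 rfl).symm .nil))
      (by simp [Walk.isPath_def, Ne.symm (hv' _), Ne.symm hwv, hw']) (by simp)
  · refine Or.inr (of_not_adj (by simp [hw]) (by simp [hw]) ?_)
    exact hG.not_adj_of_isPath
      (p := .cons hv0 (.cons h01 (.cons h12 (.cons h23 (.cons ((hw 3).2 rfl).symm .nil)))))
      (by simp [Walk.isPath_def, Ne.symm (hv' _), Ne.symm hwv, hw']) (by simp)
  · exact Or.inr hD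

theorem SimpleGraph.IsAcyclic.compl_iso_or_hasDiamond_compl (hG : G.IsAcyclic)
    (e : pathGraph 4 ↪g G) :
    Nonempty (Gᶜ ≃g G) ∨ Nonempty (Gᶜ ≃g (pathGraph 5)ᶜ) ∨ HasDiamond Gᶜ := by
  by_cases he : Function.Surjective e
  · have φ : pathGraph 4 ≃g G := RelIso.ofSurjective e he
    exact Or.inl ⟨φ.symm.compl.trans (pathGraphFourComplIso.trans φ)⟩
  obtain ⟨v, hv⟩ := not_forall.1 he
  have hv : v ∉ Set.range e := fun ⟨i, hi⟩ => hv ⟨i, hi⟩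
  suffices Nonempty (G ≃g pathGraph 5) ∨ HasDiamond Gᶜ by
    rcases this with ⟨⟨φ⟩⟩ | hD
    exacts [Or.inr (Or.inl ⟨φ.compl⟩), Or.inr (Or.inr hD)]
  rcases hG.pendant_or_hasDiamond_compl e hv with hve | hve | hD
  · exact hG.nonempty_iso_pathGraph_five_or_hasDiamond_compl e hv hve
  · exact hG.nonempty_iso_pathGraph_five_or_hasDiamond_compl e.reverse (by simpa using hv)
      fun i => by simpa [Fin.rev_eq_iff] using hve i.rev
  · exact Or.inr hD

end Forest

section Sum

variable {V W : Type*} {G : SimpleGraph V} {H : SimpleGraph W}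

theorem disjUnion_eq_sum (G : SimpleGraph V) (H : SimpleGraph W) : DisjUnion G H = G ⊕g H := by
  ext (u | u) (w | w) <;> simp [DisjUnion, fromRel_adj, adj_comm] <;> exact Adj.ne

theorem SimpleGraph.reachable_sum_iff {x y : V ⊕ W} :
    (G ⊕g H).Reachable x y ↔ Sum.LiftRel G.Reachable H.Reachable x y := by
  rw [reachable_iff_reflTransGen]
  constructor
  · intro h
    induction h with
    | refl => rcases x with x | x <;> constructor <;> rfl
    | @tail b c _ hadj ih =>
      rcases ih with ⟨r⟩ | ⟨r⟩ <;> rcases c with c | c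
      · exact .inl (r.trans (sum_adj_inl.1 hadj).reachable)
      · exact absurd hadj (not_adj_sum_inl_inr _ _)
      · exact absurd hadj.symm (not_adj_sum_inl_inr _ _)
      · exact .inr (r.trans (sum_adj_inr.1 hadj).reachable)
  · rintro (⟨r⟩ | ⟨r⟩)
    · exact (reachable_iff_reflTransGen _ _).1 (r.map Embedding.sumInl.toHom)
    · exact (reachable_iff_reflTransGen _ _).1 (r.map Embedding.sumInr.toHom)

theorem SimpleGraph.supp_connectedComponentMk_sum_inl (v : V) :
    ((G ⊕g H).connectedComponentMk (.inl v)).supp = .inl '' (G.connectedComponentMk v).supp := by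
  ext (x | x) <;> simp [reachable_sum_iff]

theorem SimpleGraph.supp_connectedComponentMk_sum_inr (w : W) :
    ((G ⊕g H).connectedComponentMk (.inr w)).supp = .inr '' (H.connectedComponentMk w).supp := by
  ext (x | x) <;> simp [reachable_sum_iff]

def SimpleGraph.Iso.sumEmpty [IsEmpty W] : G ⊕g H ≃g G where
  toEquiv := Equiv.sumEmpty V W
  map_rel_iff' := by rintro (u | u) (v | v) <;> first | exact isEmptyElim ‹W› | simp

def SimpleGraph.Iso.emptySum [IsEmpty V] : G ⊕g H ≃g H where
  toEquiv := Equiv.emptySum V W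
  map_rel_iff' := by rintro (u | u) (v | v) <;> first | exact isEmptyElim ‹V› | simp

theorem SimpleGraph.isLeft_eq_of_sum_adj {x y : V ⊕ W} (h : (G ⊕g H).Adj x y) :
    x.isLeft = y.isLeft := by
  rcases x with x | x <;> rcases y with y | y <;> simp_all

theorem SimpleGraph.exists_forall_compl_sum_adj [Nonempty V] [Nonempty W] (x : V ⊕ W) :
    ∃ z, ∀ y : V ⊕ W, y.isLeft = x.isLeft → (G ⊕g H)ᶜ.Adj y z := by
  rcases x with x | x
  · obtain ⟨w⟩ := ‹Nonempty W›
    refine ⟨.inr w, fun y hy => ?_⟩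
    rcases y with y | y <;> simp_all [compl_adj]
  · obtain ⟨v⟩ := ‹Nonempty V›
    refine ⟨.inl v, fun y hy => ?_⟩
    rcases y with y | y <;> simp_all [compl_adj]

theorem SimpleGraph.hasDiamond_compl_sum [Nonempty V] [Nonempty W]
    (e : pathGraph 4 ↪g (G ⊕g H)ᶜ) : HasDiamond (G ⊕g H)ᶜ := by
  -- Non-adjacent vertices of the `P₄` are adjacent in `G ⊕g H`, hence on the same side.
  have side : ∀ i j, i ≠ j → ¬ (pathGraph 4).Adj i j → (e i).isLeft = (e j).isLeft :=
    fun i j hij hn => isLeft_eq_of_sum_adj (not_not.1 fun h =>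
      hn (e.map_adj_iff.1 ((compl_adj _ _ _).2 ⟨e.injective.ne hij, h⟩)))
  have h0 : (e 0).isLeft = (e 1).isLeft :=
    (side 0 3 (by decide) (by simp [pathGraph_adj])).trans
      (side 1 3 (by decide) (by simp [pathGraph_adj])).symm
  have h2 : (e 2).isLeft = (e 1).isLeft := (side 2 0 (by decide) (by simp [pathGraph_adj])).trans h0
  obtain ⟨z, hz⟩ := exists_forall_compl_sum_adj (G := G) (H := H) (e 1)
  exact ⟨e 1, z, e 0, e 2, hz _ rfl, e.map_adj_iff.2 (by simp [pathGraph_adj]), hz _ h0,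
    e.map_adj_iff.2 (by simp [pathGraph_adj]), hz _ h2, by simp,
    fun h => by simpa [pathGraph_adj] using e.map_adj_iff.1 h⟩

end Sum

section Classification

variable {V W : Type*} {G : SimpleGraph V} {G' : SimpleGraph W}

def IsTreeCoP5CographOrDiamond (G : SimpleGraph V) : Prop :=
  (G.Connected ∧ G.IsAcyclic) ∨ Nonempty (G ≃g (pathGraph 5)ᶜ) ∨
    _root_.Free G (pathGraph 4) ∨ HasDiamond G

def ComponentwiseTreeCoP5CographOrDiamond (G : SimpleGraph V) : Prop :=
  ∀ c : G.ConnectedComponent, IsTreeCoP5CographOrDiamond (G.induce c.supp)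

theorem IsTreeCoP5CographOrDiamond.of_iso (φ : G ≃g G') (h : IsTreeCoP5CographOrDiamond G) :
    IsTreeCoP5CographOrDiamond G' := by
  rcases h with ⟨hconn, hacyc⟩ | ⟨⟨ψ⟩⟩ | hfree | hD
  · exact Or.inl ⟨φ.connected_iff.1 hconn, φ.isAcyclic_iff.1 hacyc⟩
  · exact Or.inr (Or.inl ⟨φ.symm.trans ψ⟩)
  · exact Or.inr (Or.inr (Or.inl (hfree.of_embedding φ.symm.toEmbedding)))
  · exact Or.inr (Or.inr (Or.inr (hD.of_embedding φ.toEmbedding)))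

namespace ComponentwiseTreeCoP5CographOrDiamond

theorem of_preconnected (h : G.Preconnected) (hG : IsTreeCoP5CographOrDiamond G) :
    ComponentwiseTreeCoP5CographOrDiamond G := fun c =>
  hG.of_iso (by rw [h.supp_eq_univ c]; exact (induceUnivIso G).symm)

theorem of_free (h : _root_.Free G (pathGraph 4)) : ComponentwiseTreeCoP5CographOrDiamond G :=
  fun _ => Or.inr (Or.inr (Or.inl (h.of_embedding (Embedding.induce _))))

theorem of_iso (φ : G ≃g G') (h : ComponentwiseTreeCoP5CographOrDiamond G) :
    ComponentwiseTreeCoP5CographOrDiamond G' := fun c => by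
  have := (h (φ.connectedComponentEquiv.symm c)).of_iso (φ.induceSupp _)
  rwa [Equiv.apply_symm_apply] at this

theorem sum (h₁ : ComponentwiseTreeCoP5CographOrDiamond G)
    (h₂ : ComponentwiseTreeCoP5CographOrDiamond G') :
    ComponentwiseTreeCoP5CographOrDiamond (G ⊕g G') := fun c => by
  induction c using ConnectedComponent.ind with | h x => ?_
  rcases x with v | w
  · rw [supp_connectedComponentMk_sum_inl]
    exact (h₁ _).of_iso (Embedding.sumInl.induceImage _)
  · rw [supp_connectedComponentMk_sum_inr]
    exact (h₂ _).of_iso (Embedding.sumInr.induceImage _)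

theorem compl_sum (h₁ : ComponentwiseTreeCoP5CographOrDiamond Gᶜ)
    (h₂ : ComponentwiseTreeCoP5CographOrDiamond G'ᶜ) :
    ComponentwiseTreeCoP5CographOrDiamond (G ⊕g G')ᶜ := by
  rcases isEmpty_or_nonempty W with hW | hW
  · exact h₁.of_iso Iso.sumEmpty.compl.symm
  rcases isEmpty_or_nonempty V with hV | hV
  · exact h₂.of_iso Iso.emptySum.compl.symm
  by_cases hfree : _root_.Free (G ⊕g G')ᶜ (pathGraph 4)
  · exact of_free hfree
  obtain ⟨e⟩ := not_isEmpty_iff.1 hfree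
  exact of_preconnected
    ((connected_or_preconnected_compl (G := G ⊕g G')).resolve_left not_connected_sum)
    (Or.inr (Or.inr (Or.inr (hasDiamond_compl_sum e))))

theorem compl_of_isAcyclic (hconn : G.Connected) (hacyc : G.IsAcyclic) :
    ComponentwiseTreeCoP5CographOrDiamond Gᶜ := by
  by_cases hfree : _root_.Free G (pathGraph 4)
  · exact of_free hfree.compl_pathGraph_four
  obtain ⟨e⟩ := not_isEmpty_iff.1 hfree
  refine of_preconnected (hacyc.compl_preconnected e) ?_
  rcases hacyc.compl_iso_or_hasDiamond_compl e with ⟨⟨φ⟩⟩ | hP5 | hD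
  · exact Or.inl ⟨φ.connected_iff.2 hconn, φ.isAcyclic_iff.2 hacyc⟩
  · exact Or.inr (Or.inl hP5)
  · exact Or.inr (Or.inr (Or.inr hD))

end ComponentwiseTreeCoP5CographOrDiamond

open ComponentwiseTreeCoP5CographOrDiamond in
theorem TreeCograph.componentwiseTreeCoP5CographOrDiamond {V : Type*} {G : SimpleGraph V}
    (h : TreeCograph G) :
    ComponentwiseTreeCoP5CographOrDiamond G ∧ ComponentwiseTreeCoP5CographOrDiamond Gᶜ := by
  induction h with
  | tree G hconn hacyc =>
    exact ⟨of_preconnected hconn.preconnected (Or.inl ⟨hconn, hacyc⟩),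
      compl_of_isAcyclic hconn hacyc⟩
  | union _ _ ih₁ ih₂ =>
    rw [disjUnion_eq_sum]
    exact ⟨sum ih₁.1 ih₂.1, compl_sum ih₁.2 ih₂.2⟩
  | compl _ ih => exact ⟨ih.2, by rw [compl_compl]; exact ih.1⟩
  | iso _ hφ ih =>
    obtain ⟨φ⟩ := hφ
    exact ⟨ih.1.of_iso φ, ih.2.of_iso φ.compl⟩

end Classification

theorem stmt_13_general {V : Type} (G : SimpleGraph V) (h : TreeCograph G)
    (hc : ContactB0VPG G) :
    ∀ c : G.ConnectedComponent,
      ((G.induce c.supp).Connected ∧ (G.induce c.supp).IsAcyclic) ∨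
      Nonempty ((G.induce c.supp) ≃g (pathGraph 5)ᶜ) ∨
      (_root_.Free (G.induce c.supp) (pathGraph 4) ∧ ContactB0VPG (G.induce c.supp)) := by
  intro c
  rcases h.componentwiseTreeCoP5CographOrDiamond.1 c with htree | hP5 | hfree | hD
  · exact Or.inl htree
  · exact Or.inr (Or.inl hP5)
  · exact Or.inr (Or.inr ⟨hfree, hc.of_embedding (Embedding.induce _)⟩)
  · exact absurd (hD.of_embedding (Embedding.induce _)) hc.not_hasDiamond

/-- Every connected component of a contact B₀-VPG tree-cograph is a
tree, or is isomorphic to the complement of `P₅`, or is a contact B₀-VPG cograph. -/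
theorem stmt_13 {V : Type} [Fintype V] (G : SimpleGraph V) (h : TreeCograph G)
    (hc : ContactB0VPG G) :
    ∀ c : G.ConnectedComponent,
      ((G.induce c.supp).Connected ∧ (G.induce c.supp).IsAcyclic) ∨
      Nonempty ((G.induce c.supp) ≃g (pathGraph 5)ᶜ) ∨
      (_root_.Free (G.induce c.supp) (pathGraph 4) ∧ ContactB0VPG (G.induce c.supp)) :=
  stmt_13_general G h hc
end

section
/- The graph K₃,₃* (obtained from K₃,₃ by subdividing exactly one edge) and the complement C̄₆ of the 6-cycle are not contact B₀-VPG graphs. -/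
open SimpleGraph

-- helper: Prod ext
lemma s19_pext {r : ℤ × ℤ} {a b : ℤ} (h1 : r.1 = a) (h2 : r.2 = b) : r = (a, b) := by
  rw [← h1, ← h2]

lemma s19_grid_coord {S : Set (ℤ × ℤ)} (hS : IsGridSegment S) {p q : ℤ × ℤ}
    (hp : p ∈ S) (hq : q ∈ S) : p.1 = q.1 ∨ p.2 = q.2 := by
  rcases hS with ⟨y, a, b, hab, rfl⟩ | ⟨x, a, b, hab, rfl⟩
  · exact Or.inr (hp.1.trans hq.1.symm)
  · exact Or.inl (hp.1.trans hq.1.symm)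

lemma s19_same_row {S : Set (ℤ × ℤ)} (hS : IsGridSegment S) {a b y y' : ℤ}
    (ha : ((a, y) : ℤ × ℤ) ∈ S) (hb : ((b, y') : ℤ × ℤ) ∈ S) (hne : a ≠ b) : y = y' := by
  rcases s19_grid_coord hS ha hb with h | h
  · exact absurd h hne
  · exact h

lemma s19_same_col {S : Set (ℤ × ℤ)} (hS : IsGridSegment S) {a b y y' : ℤ}
    (ha : ((a, y) : ℤ × ℤ) ∈ S) (hb : ((b, y') : ℤ × ℤ) ∈ S) (hne : y ≠ y') : a = b := by
  rcases s19_grid_coord hS ha hb with h | h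
  · exact h
  · exact absurd h hne

lemma s19_hspan {S : Set (ℤ × ℤ)} (hS : IsGridSegment S) {a b c y : ℤ}
    (ha : ((a, y) : ℤ × ℤ) ∈ S) (hb : ((b, y) : ℤ × ℤ) ∈ S) (h1 : a ≤ c) (h2 : c ≤ b) :
    ((c, y) : ℤ × ℤ) ∈ S := by
  rcases hS with ⟨y', a', b', hab, rfl⟩ | ⟨x', a', b', hab, rfl⟩
  · obtain ⟨e1, e2, e3⟩ := ha
    obtain ⟨f1, f2, f3⟩ := hb
    exact ⟨e1, by omega, by omega⟩
  · obtain ⟨e1, e2, e3⟩ := ha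
    obtain ⟨f1, f2, f3⟩ := hb
    simp only [Set.mem_setOf_eq] at *
    exact ⟨by omega, e2, e3⟩

lemma s19_vspan {S : Set (ℤ × ℤ)} (hS : IsGridSegment S) {a b c x : ℤ}
    (ha : ((x, a) : ℤ × ℤ) ∈ S) (hb : ((x, b) : ℤ × ℤ) ∈ S) (h1 : a ≤ c) (h2 : c ≤ b) :
    ((x, c) : ℤ × ℤ) ∈ S := by
  rcases hS with ⟨y', a', b', hab, rfl⟩ | ⟨x', a', b', hab, rfl⟩
  · obtain ⟨e1, e2, e3⟩ := ha
    obtain ⟨f1, f2, f3⟩ := hb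
    simp only [Set.mem_setOf_eq] at *
    exact ⟨by omega, e2, e3⟩
  · obtain ⟨e1, e2, e3⟩ := ha
    obtain ⟨f1, f2, f3⟩ := hb
    exact ⟨e1, by omega, by omega⟩

lemma s19_ep_not_interior_h {S : Set (ℤ × ℤ)} {p : ℤ × ℤ} {a b : ℤ}
    (hE : IsEndpointOf p S) (ha : ((a, p.2) : ℤ × ℤ) ∈ S) (hb : ((b, p.2) : ℤ × ℤ) ∈ S)
    (h1 : a < p.1) (h2 : p.1 < b) : False := by
  rcases hE with ⟨y, a', b', hab, rfl, hp⟩ | ⟨x, a', b', hab, rfl, hp⟩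
  · obtain ⟨e1, e2, e3⟩ := ha
    obtain ⟨f1, f2, f3⟩ := hb
    rcases hp with rfl | rfl <;> simp only [Prod.fst, Prod.snd] at * <;> omega
  · obtain ⟨e1, e2, e3⟩ := ha
    obtain ⟨f1, f2, f3⟩ := hb
    simp only [Set.mem_setOf_eq] at *
    omega

lemma s19_ep_not_interior_v {S : Set (ℤ × ℤ)} {p : ℤ × ℤ} {a b : ℤ}
    (hE : IsEndpointOf p S) (ha : ((p.1, a) : ℤ × ℤ) ∈ S) (hb : ((p.1, b) : ℤ × ℤ) ∈ S)
    (h1 : a < p.2) (h2 : p.2 < b) : False := by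
  rcases hE with ⟨y, a', b', hab, rfl, hp⟩ | ⟨x, a', b', hab, rfl, hp⟩
  · obtain ⟨e1, e2, e3⟩ := ha
    obtain ⟨f1, f2, f3⟩ := hb
    simp only [Set.mem_setOf_eq] at *
    omega
  · obtain ⟨e1, e2, e3⟩ := ha
    obtain ⟨f1, f2, f3⟩ := hb
    rcases hp with rfl | rfl <;> simp only [Prod.fst, Prod.snd] at * <;> omega

lemma s19_row_eq_row {y a b y' a' b' : ℤ} (hab : a ≤ b) (hab' : a' ≤ b')
    (h : {q : ℤ × ℤ | q.2 = y ∧ a ≤ q.1 ∧ q.1 ≤ b} = {q : ℤ × ℤ | q.2 = y' ∧ a' ≤ q.1 ∧ q.1 ≤ b'}) :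
    y = y' ∧ a = a' ∧ b = b' := by
  have h1 : ((a, y) : ℤ × ℤ) ∈ {q : ℤ × ℤ | q.2 = y' ∧ a' ≤ q.1 ∧ q.1 ≤ b'} := by
    rw [← h]; exact ⟨rfl, le_refl a, hab⟩
  have h2 : ((b, y) : ℤ × ℤ) ∈ {q : ℤ × ℤ | q.2 = y' ∧ a' ≤ q.1 ∧ q.1 ≤ b'} := by
    rw [← h]; exact ⟨rfl, hab, le_refl b⟩
  have h3 : ((a', y') : ℤ × ℤ) ∈ {q : ℤ × ℤ | q.2 = y ∧ a ≤ q.1 ∧ q.1 ≤ b} := by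
    rw [h]; exact ⟨rfl, le_refl a', hab'⟩
  have h4 : ((b', y') : ℤ × ℤ) ∈ {q : ℤ × ℤ | q.2 = y ∧ a ≤ q.1 ∧ q.1 ≤ b} := by
    rw [h]; exact ⟨rfl, hab', le_refl b'⟩
  obtain ⟨e1, e2, e3⟩ := h1; obtain ⟨f1, f2, f3⟩ := h2
  obtain ⟨g1, g2, g3⟩ := h3; obtain ⟨k1, k2, k3⟩ := h4
  simp only [Set.mem_setOf_eq] at *
  exact ⟨e1, by omega, by omega⟩

lemma s19_col_eq_col {x a b x' a' b' : ℤ} (hab : a ≤ b) (hab' : a' ≤ b')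
    (h : {q : ℤ × ℤ | q.1 = x ∧ a ≤ q.2 ∧ q.2 ≤ b} = {q : ℤ × ℤ | q.1 = x' ∧ a' ≤ q.2 ∧ q.2 ≤ b'}) :
    x = x' ∧ a = a' ∧ b = b' := by
  have h1 : ((x, a) : ℤ × ℤ) ∈ {q : ℤ × ℤ | q.1 = x' ∧ a' ≤ q.2 ∧ q.2 ≤ b'} := by
    rw [← h]; exact ⟨rfl, le_refl a, hab⟩
  have h2 : ((x, b) : ℤ × ℤ) ∈ {q : ℤ × ℤ | q.1 = x' ∧ a' ≤ q.2 ∧ q.2 ≤ b'} := by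
    rw [← h]; exact ⟨rfl, hab, le_refl b⟩
  have h3 : ((x', a') : ℤ × ℤ) ∈ {q : ℤ × ℤ | q.1 = x ∧ a ≤ q.2 ∧ q.2 ≤ b} := by
    rw [h]; exact ⟨rfl, le_refl a', hab'⟩
  have h4 : ((x', b') : ℤ × ℤ) ∈ {q : ℤ × ℤ | q.1 = x ∧ a ≤ q.2 ∧ q.2 ≤ b} := by
    rw [h]; exact ⟨rfl, hab', le_refl b'⟩
  obtain ⟨e1, e2, e3⟩ := h1; obtain ⟨f1, f2, f3⟩ := h2
  obtain ⟨g1, g2, g3⟩ := h3; obtain ⟨k1, k2, k3⟩ := h4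
  simp only [Set.mem_setOf_eq] at *
  exact ⟨e1, by omega, by omega⟩

lemma s19_row_eq_col {y a b x' a' b' : ℤ} (hab : a ≤ b) (hab' : a' ≤ b')
    (h : {q : ℤ × ℤ | q.2 = y ∧ a ≤ q.1 ∧ q.1 ≤ b} = {q : ℤ × ℤ | q.1 = x' ∧ a' ≤ q.2 ∧ q.2 ≤ b'}) :
    a = x' ∧ b = x' ∧ a' = y ∧ b' = y := by
  have h1 : ((a, y) : ℤ × ℤ) ∈ {q : ℤ × ℤ | q.1 = x' ∧ a' ≤ q.2 ∧ q.2 ≤ b'} := by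
    rw [← h]; exact ⟨rfl, le_refl a, hab⟩
  have h2 : ((b, y) : ℤ × ℤ) ∈ {q : ℤ × ℤ | q.1 = x' ∧ a' ≤ q.2 ∧ q.2 ≤ b'} := by
    rw [← h]; exact ⟨rfl, hab, le_refl b⟩
  have h3 : ((x', a') : ℤ × ℤ) ∈ {q : ℤ × ℤ | q.2 = y ∧ a ≤ q.1 ∧ q.1 ≤ b} := by
    rw [h]; exact ⟨rfl, le_refl a', hab'⟩
  have h4 : ((x', b') : ℤ × ℤ) ∈ {q : ℤ × ℤ | q.2 = y ∧ a ≤ q.1 ∧ q.1 ≤ b} := by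
    rw [h]; exact ⟨rfl, hab', le_refl b'⟩
  obtain ⟨e1, e2, e3⟩ := h1; obtain ⟨f1, f2, f3⟩ := h2
  obtain ⟨g1, g2, g3⟩ := h3; obtain ⟨k1, k2, k3⟩ := h4
  simp only [Set.mem_setOf_eq] at *
  exact ⟨e1, f1, g1, k1⟩

lemma s19_endpoints_bound {S : Set (ℤ × ℤ)} {p p' q : ℤ × ℤ}
    (h1 : IsEndpointOf p S) (h2 : IsEndpointOf p' S) (hne : p ≠ p') (hq : q ∈ S) :
    (min p.1 p'.1 ≤ q.1 ∧ q.1 ≤ max p.1 p'.1) ∧ (min p.2 p'.2 ≤ q.2 ∧ q.2 ≤ max p.2 p'.2) := by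
  rcases h1 with ⟨y, a, b, hab, rfl, hp⟩ | ⟨x, a, b, hab, rfl, hp⟩
  · rcases h2 with ⟨y', a', b', hab', hEq, hp'⟩ | ⟨x', a', b', hab', hEq, hp'⟩
    · obtain ⟨ey, ea, eb⟩ := s19_row_eq_row hab hab' hEq
      subst ey; subst ea; subst eb
      obtain ⟨hq1, hq2, hq3⟩ := hq
      rcases hp with rfl | rfl <;> rcases hp' with rfl | rfl <;>
        simp only [Prod.fst, Prod.snd] at * <;>
        first
          | exact absurd rfl hne
          | exact ⟨⟨by omega, by omega⟩, by omega, by omega⟩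
    · obtain ⟨e1, e2, e3, e4⟩ := s19_row_eq_col hab hab' hEq
      exfalso
      apply hne
      rcases hp with rfl | rfl <;> rcases hp' with rfl | rfl <;>
        simp only [Prod.mk.injEq] <;> omega
  · rcases h2 with ⟨y', a', b', hab', hEq, hp'⟩ | ⟨x', a', b', hab', hEq, hp'⟩
    · obtain ⟨e1, e2, e3, e4⟩ := s19_row_eq_col hab' hab hEq.symm
      exfalso
      apply hne
      rcases hp with rfl | rfl <;> rcases hp' with rfl | rfl <;>
        simp only [Prod.mk.injEq] <;> omega
    · obtain ⟨ex, ea, eb⟩ := s19_col_eq_col hab hab' hEq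
      subst ex; subst ea; subst eb
      obtain ⟨hq1, hq2, hq3⟩ := hq
      rcases hp with rfl | rfl <;> rcases hp' with rfl | rfl <;>
        simp only [Prod.fst, Prod.snd] at * <;>
        first
          | exact absurd rfl hne
          | exact ⟨⟨by omega, by omega⟩, by omega, by omega⟩

lemma s19_adj_of_mem {V : Type*} {G : SimpleGraph V} (R : ContactB0VPGRep G) {u v : V}
    (huv : u ≠ v) {p : ℤ × ℤ} (hu : p ∈ R.seg u) (hv : p ∈ R.seg v) : G.Adj u v :=
  (R.adj_iff u v huv).2 ⟨p, hu, hv⟩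

lemma s19_contact_pt {V : Type*} {G : SimpleGraph V} (R : ContactB0VPGRep G) {u v : V}
    (huv : u ≠ v) (h : G.Adj u v) : ∃ p, R.seg u ∩ R.seg v = {p} := by
  obtain ⟨p, hp⟩ := (R.adj_iff u v huv).1 h
  exact ⟨p, (R.inter_subsingleton u v huv).eq_singleton_of_mem hp⟩

lemma s19_sing_left {A B : Set (ℤ × ℤ)} {p : ℤ × ℤ} (h : A ∩ B = {p}) : p ∈ A :=
  ((Set.eq_singleton_iff_unique_mem.mp h).1).1

lemma s19_sing_right {A B : Set (ℤ × ℤ)} {p : ℤ × ℤ} (h : A ∩ B = {p}) : p ∈ B :=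
  ((Set.eq_singleton_iff_unique_mem.mp h).1).2

lemma s19_sing_eq {A B : Set (ℤ × ℤ)} {p q : ℤ × ℤ} (h : A ∩ B = {p})
    (hqA : q ∈ A) (hqB : q ∈ B) : q = p :=
  (Set.eq_singleton_iff_unique_mem.mp h).2 q ⟨hqA, hqB⟩

-- transpose
lemma s19_swap_mem {S : Set (ℤ × ℤ)} {p : ℤ × ℤ} : p ∈ Prod.swap '' S ↔ p.swap ∈ S := by
  constructor
  · rintro ⟨q, hq, rfl⟩; simpa using hq
  · intro h; exact ⟨p.swap, h, Prod.swap_swap p⟩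

lemma s19_swap_row (y a b : ℤ) :
    Prod.swap '' {q : ℤ × ℤ | q.2 = y ∧ a ≤ q.1 ∧ q.1 ≤ b}
      = {q : ℤ × ℤ | q.1 = y ∧ a ≤ q.2 ∧ q.2 ≤ b} := by
  ext p; rw [s19_swap_mem]; rfl

lemma s19_swap_col (x a b : ℤ) :
    Prod.swap '' {q : ℤ × ℤ | q.1 = x ∧ a ≤ q.2 ∧ q.2 ≤ b}
      = {q : ℤ × ℤ | q.2 = x ∧ a ≤ q.1 ∧ q.1 ≤ b} := by
  ext p; rw [s19_swap_mem]; rfl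

lemma s19_grid_swap {S : Set (ℤ × ℤ)} (h : IsGridSegment S) :
    IsGridSegment (Prod.swap '' S) := by
  rcases h with ⟨y, a, b, hab, rfl⟩ | ⟨x, a, b, hab, rfl⟩
  · exact Or.inr ⟨y, a, b, hab, s19_swap_row y a b⟩
  · exact Or.inl ⟨x, a, b, hab, s19_swap_col x a b⟩

lemma s19_endpoint_swap {p : ℤ × ℤ} {S : Set (ℤ × ℤ)} (h : IsEndpointOf p S) :
    IsEndpointOf p.swap (Prod.swap '' S) := by
  rcases h with ⟨y, a, b, hab, rfl, hp⟩ | ⟨x, a, b, hab, rfl, hp⟩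
  · refine Or.inr ⟨y, a, b, hab, s19_swap_row y a b, ?_⟩
    rcases hp with rfl | rfl
    · exact Or.inl rfl
    · exact Or.inr rfl
  · refine Or.inl ⟨x, a, b, hab, s19_swap_col x a b, ?_⟩
    rcases hp with rfl | rfl
    · exact Or.inl rfl
    · exact Or.inr rfl

def ContactB0VPGRep.transpose {V : Type*} {G : SimpleGraph V} (R : ContactB0VPGRep G) :
    ContactB0VPGRep G where
  seg v := Prod.swap '' R.seg v
  isSeg v := s19_grid_swap (R.isSeg v)
  adj_iff u v h := by
    rw [R.adj_iff u v h, ← Set.image_inter Prod.swap_injective]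
    constructor
    · rintro ⟨p, hp⟩; exact ⟨Prod.swap p, ⟨p, hp, rfl⟩⟩
    · rintro ⟨p, q, hq, rfl⟩; exact ⟨q, hq⟩
  inter_subsingleton u v h := by
    rw [← Set.image_inter Prod.swap_injective]
    exact (R.inter_subsingleton u v h).image _
  contact u v h p hp := by
    rw [← Set.image_inter Prod.swap_injective] at hp
    obtain ⟨q, hq, rfl⟩ := hp
    rcases R.contact u v h q hq with h' | h'
    · exact Or.inl (s19_endpoint_swap h')
    · exact Or.inr (s19_endpoint_swap h')

lemma s19_grid_line {S : Set (ℤ × ℤ)} (h : IsGridSegment S) :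
    (∃ y, ∀ p ∈ S, p.2 = y) ∨ (∃ x, ∀ p ∈ S, p.1 = x) := by
  rcases h with ⟨y, a, b, hab, rfl⟩ | ⟨x, a, b, hab, rfl⟩
  · exact Or.inl ⟨y, fun p hp => hp.1⟩
  · exact Or.inr ⟨x, fun p hp => hp.1⟩

lemma s19_tri_mixed {S T U : Set (ℤ × ℤ)} {y x : ℤ}
    (hS : ∀ p ∈ S, p.2 = y) (hT : ∀ p ∈ T, p.1 = x) (hU : IsGridSegment U)
    (hST : (S ∩ T).Nonempty) (hSU : (S ∩ U).Nonempty) (hTU : (T ∩ U).Nonempty) :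
    ∃ c, c ∈ S ∧ c ∈ T ∧ c ∈ U := by
  obtain ⟨p, hpS, hpT⟩ := hST
  have hp : p = (x, y) := s19_pext (hT p hpT) (hS p hpS)
  obtain ⟨q, hqS, hqU⟩ := hSU
  obtain ⟨r, hrT, hrU⟩ := hTU
  rcases s19_grid_line hU with ⟨y', hy'⟩ | ⟨x', hx'⟩
  · have h1 : y' = y := ((hy' q hqU).symm).trans (hS q hqS)
    have hr : r = (x, y) := s19_pext (hT r hrT) ((hy' r hrU).trans h1)
    exact ⟨(x, y), hp ▸ hpS, hp ▸ hpT, hr ▸ hrU⟩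
  · have h1 : x' = x := ((hx' r hrU).symm).trans (hT r hrT)
    have hqe : q = (x, y) := s19_pext ((hx' q hqU).trans h1) (hS q hqS)
    exact ⟨(x, y), hp ▸ hpS, hp ▸ hpT, hqe ▸ hqU⟩

lemma s19_tri_helly_h {S T U : Set (ℤ × ℤ)} (hS : IsGridSegment S) (hT : IsGridSegment T)
    (hU : IsGridSegment U) {y x1 x2 x3 : ℤ}
    (h1S : ((x1, y) : ℤ × ℤ) ∈ S) (h1T : ((x1, y) : ℤ × ℤ) ∈ T)
    (h2S : ((x2, y) : ℤ × ℤ) ∈ S) (h2U : ((x2, y) : ℤ × ℤ) ∈ U)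
    (h3T : ((x3, y) : ℤ × ℤ) ∈ T) (h3U : ((x3, y) : ℤ × ℤ) ∈ U) :
    ∃ c, c ∈ S ∧ c ∈ T ∧ c ∈ U := by
  rcases le_total x1 x2 with h12 | h21
  · rcases le_total x2 x3 with h23 | h32
    · exact ⟨(x2, y), h2S, s19_hspan hT h1T h3T h12 h23, h2U⟩
    · rcases le_total x1 x3 with h13 | h31
      · exact ⟨(x3, y), s19_hspan hS h1S h2S h13 h32, h3T, h3U⟩
      · exact ⟨(x1, y), h1S, h1T, s19_hspan hU h3U h2U h31 h12⟩
  · rcases le_total x1 x3 with h13 | h31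
    · exact ⟨(x1, y), h1S, h1T, s19_hspan hU h2U h3U h21 h13⟩
    · rcases le_total x2 x3 with h23 | h32
      · exact ⟨(x3, y), s19_hspan hS h2S h1S h23 h31, h3T, h3U⟩
      · exact ⟨(x2, y), h2S, s19_hspan hT h3T h1T h32 h21, h2U⟩

lemma s19_tri_helly_v {S T U : Set (ℤ × ℤ)} (hS : IsGridSegment S) (hT : IsGridSegment T)
    (hU : IsGridSegment U) {x y1 y2 y3 : ℤ}
    (h1S : ((x, y1) : ℤ × ℤ) ∈ S) (h1T : ((x, y1) : ℤ × ℤ) ∈ T)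
    (h2S : ((x, y2) : ℤ × ℤ) ∈ S) (h2U : ((x, y2) : ℤ × ℤ) ∈ U)
    (h3T : ((x, y3) : ℤ × ℤ) ∈ T) (h3U : ((x, y3) : ℤ × ℤ) ∈ U) :
    ∃ c, c ∈ S ∧ c ∈ T ∧ c ∈ U := by
  rcases le_total y1 y2 with h12 | h21
  · rcases le_total y2 y3 with h23 | h32
    · exact ⟨(x, y2), h2S, s19_vspan hT h1T h3T h12 h23, h2U⟩
    · rcases le_total y1 y3 with h13 | h31
      · exact ⟨(x, y3), s19_vspan hS h1S h2S h13 h32, h3T, h3U⟩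
      · exact ⟨(x, y1), h1S, h1T, s19_vspan hU h3U h2U h31 h12⟩
  · rcases le_total y1 y3 with h13 | h31
    · exact ⟨(x, y1), h1S, h1T, s19_vspan hU h2U h3U h21 h13⟩
    · rcases le_total y2 y3 with h23 | h32
      · exact ⟨(x, y3), s19_vspan hS h2S h1S h23 h31, h3T, h3U⟩
      · exact ⟨(x, y2), h2S, s19_vspan hT h3T h1T h32 h21, h2U⟩

lemma s19_tri_common {S T U : Set (ℤ × ℤ)} (hS : IsGridSegment S) (hT : IsGridSegment T)
    (hU : IsGridSegment U)
    (hST : (S ∩ T).Nonempty) (hSU : (S ∩ U).Nonempty) (hTU : (T ∩ U).Nonempty)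
    (sST : (S ∩ T).Subsingleton) (sSU : (S ∩ U).Subsingleton) (sTU : (T ∩ U).Subsingleton) :
    ∃ p, S ∩ T = {p} ∧ S ∩ U = {p} ∧ T ∩ U = {p} := by
  suffices h : ∃ c, c ∈ S ∧ c ∈ T ∧ c ∈ U by
    obtain ⟨c, h1, h2, h3⟩ := h
    exact ⟨c, sST.eq_singleton_of_mem ⟨h1, h2⟩, sSU.eq_singleton_of_mem ⟨h1, h3⟩,
      sTU.eq_singleton_of_mem ⟨h2, h3⟩⟩
  have swST : (T ∩ S).Nonempty := by obtain ⟨r, h1, h2⟩ := hST; exact ⟨r, h2, h1⟩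
  have swSU : (U ∩ S).Nonempty := by obtain ⟨r, h1, h2⟩ := hSU; exact ⟨r, h2, h1⟩
  have swTU : (U ∩ T).Nonempty := by obtain ⟨r, h1, h2⟩ := hTU; exact ⟨r, h2, h1⟩
  rcases s19_grid_line hS with ⟨yS, hyS⟩ | ⟨xS, hxS⟩ <;>
    rcases s19_grid_line hT with ⟨yT, hyT⟩ | ⟨xT, hxT⟩ <;>
      rcases s19_grid_line hU with ⟨yU, hyU⟩ | ⟨xU, hxU⟩
  · -- HHH
    obtain ⟨p1, hp1S, hp1T⟩ := hST
    obtain ⟨p2, hp2S, hp2U⟩ := hSU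
    obtain ⟨p3, hp3T, hp3U⟩ := hTU
    have e1 : p1 = (p1.1, yS) := s19_pext rfl (hyS p1 hp1S)
    have e2 : p2 = (p2.1, yS) := s19_pext rfl (hyS p2 hp2S)
    have eT : yT = yS := (hyT p1 hp1T).symm.trans (hyS p1 hp1S)
    have e3 : p3 = (p3.1, yS) := s19_pext rfl ((hyT p3 hp3T).trans eT)
    exact s19_tri_helly_h hS hT hU (e1 ▸ hp1S) (e1 ▸ hp1T) (e2 ▸ hp2S) (e2 ▸ hp2U)
      (e3 ▸ hp3T) (e3 ▸ hp3U)
  · -- HHV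
    obtain ⟨c, h1, h2, h3⟩ := s19_tri_mixed hyS hxU hT hSU hST swTU
    exact ⟨c, h1, h3, h2⟩
  · -- HVH
    exact s19_tri_mixed hyS hxT hU hST hSU hTU
  · -- HVV
    exact s19_tri_mixed hyS hxT hU hST hSU hTU
  · -- VHH
    obtain ⟨c, h1, h2, h3⟩ := s19_tri_mixed hyT hxS hU swST hTU hSU
    exact ⟨c, h2, h1, h3⟩
  · -- VHV
    obtain ⟨c, h1, h2, h3⟩ := s19_tri_mixed hyT hxS hU swST hTU hSU
    exact ⟨c, h2, h1, h3⟩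
  · -- VVH
    obtain ⟨c, h1, h2, h3⟩ := s19_tri_mixed hyU hxS hT swSU swTU hST
    exact ⟨c, h2, h3, h1⟩
  · -- VVV
    obtain ⟨p1, hp1S, hp1T⟩ := hST
    obtain ⟨p2, hp2S, hp2U⟩ := hSU
    obtain ⟨p3, hp3T, hp3U⟩ := hTU
    have e1 : p1 = (xS, p1.2) := s19_pext (hxS p1 hp1S) rfl
    have e2 : p2 = (xS, p2.2) := s19_pext (hxS p2 hp2S) rfl
    have eT : xT = xS := (hxT p1 hp1T).symm.trans (hxS p1 hp1S)
    have e3 : p3 = (xS, p3.2) := s19_pext ((hxT p3 hp3T).trans eT) rfl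
    exact s19_tri_helly_v hS hT hU (e1 ▸ hp1S) (e1 ▸ hp1T) (e2 ▸ hp2S) (e2 ▸ hp2U)
      (e3 ▸ hp3T) (e3 ▸ hp3U)

lemma s19_sameSideV {S T : Set (ℤ × ℤ)} {p : ℤ × ℤ} {s t : ℤ}
    (hS : IsGridSegment S) (hT : IsGridSegment T) (hpair : S ∩ T = {p})
    (hs : ((p.1, s) : ℤ × ℤ) ∈ S) (ht : ((p.1, t) : ℤ × ℤ) ∈ T)
    (hsne : s ≠ p.2) (htne : t ≠ p.2) (hiff : s < p.2 ↔ t < p.2) : False := by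
  have hpS : ((p.1, p.2) : ℤ × ℤ) ∈ S := by rw [Prod.mk.eta]; exact s19_sing_left hpair
  have hpT : ((p.1, p.2) : ℤ × ℤ) ∈ T := by rw [Prod.mk.eta]; exact s19_sing_right hpair
  rcases lt_or_gt_of_ne hsne with h | h
  · have ht' : t < p.2 := hiff.mp h
    have hmS : ((p.1, max s t) : ℤ × ℤ) ∈ S := s19_vspan hS hs hpS (le_max_left s t) (by omega)
    have hmT : ((p.1, max s t) : ℤ × ℤ) ∈ T := s19_vspan hT ht hpT (le_max_right s t) (by omega)
    have := s19_sing_eq hpair hmS hmT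
    have h2 : max s t = p.2 := congrArg Prod.snd this
    omega
  · have ht' : p.2 < t := by
      rcases lt_or_gt_of_ne htne with h' | h'
      · exact absurd (hiff.mpr h') (by omega)
      · exact h'
    have hmS : ((p.1, min s t) : ℤ × ℤ) ∈ S := s19_vspan hS hpS hs (by omega) (min_le_left s t)
    have hmT : ((p.1, min s t) : ℤ × ℤ) ∈ T := s19_vspan hT hpT ht (by omega) (min_le_right s t)
    have := s19_sing_eq hpair hmS hmT
    have h2 : min s t = p.2 := congrArg Prod.snd this
    omega

lemma s19_sameSideH {S T : Set (ℤ × ℤ)} {p : ℤ × ℤ} {s t : ℤ}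
    (hS : IsGridSegment S) (hT : IsGridSegment T) (hpair : S ∩ T = {p})
    (hs : ((s, p.2) : ℤ × ℤ) ∈ S) (ht : ((t, p.2) : ℤ × ℤ) ∈ T)
    (hsne : s ≠ p.1) (htne : t ≠ p.1) (hiff : s < p.1 ↔ t < p.1) : False := by
  have hpS : ((p.1, p.2) : ℤ × ℤ) ∈ S := by rw [Prod.mk.eta]; exact s19_sing_left hpair
  have hpT : ((p.1, p.2) : ℤ × ℤ) ∈ T := by rw [Prod.mk.eta]; exact s19_sing_right hpair
  rcases lt_or_gt_of_ne hsne with h | h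
  · have ht' : t < p.1 := hiff.mp h
    have hmS : ((max s t, p.2) : ℤ × ℤ) ∈ S := s19_hspan hS hs hpS (le_max_left s t) (by omega)
    have hmT : ((max s t, p.2) : ℤ × ℤ) ∈ T := s19_hspan hT ht hpT (le_max_right s t) (by omega)
    have := s19_sing_eq hpair hmS hmT
    have h2 : max s t = p.1 := congrArg Prod.fst this
    omega
  · have ht' : p.1 < t := by
      rcases lt_or_gt_of_ne htne with h' | h'
      · exact absurd (hiff.mpr h') (by omega)
      · exact h'
    have hmS : ((min s t, p.2) : ℤ × ℤ) ∈ S := s19_hspan hS hpS hs (by omega) (min_le_left s t)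
    have hmT : ((min s t, p.2) : ℤ × ℤ) ∈ T := s19_hspan hT hpT ht (by omega) (min_le_right s t)
    have := s19_sing_eq hpair hmS hmT
    have h2 : min s t = p.1 := congrArg Prod.fst this
    omega

lemma s19_c6 : ¬ ContactB0VPG (cycleGraph 6)ᶜ := by
  rintro ⟨R⟩
  obtain ⟨p, hp02, hp04, hp24⟩ := s19_tri_common (R.isSeg 0) (R.isSeg 2) (R.isSeg 4)
    ((R.adj_iff 0 2 (by decide)).1 (by decide)) ((R.adj_iff 0 4 (by decide)).1 (by decide))
    ((R.adj_iff 2 4 (by decide)).1 (by decide))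
    (R.inter_subsingleton 0 2 (by decide)) (R.inter_subsingleton 0 4 (by decide))
    (R.inter_subsingleton 2 4 (by decide))
  obtain ⟨q, hq13, hq15, hq35⟩ := s19_tri_common (R.isSeg 1) (R.isSeg 3) (R.isSeg 5)
    ((R.adj_iff 1 3 (by decide)).1 (by decide)) ((R.adj_iff 1 5 (by decide)).1 (by decide))
    ((R.adj_iff 3 5 (by decide)).1 (by decide))
    (R.inter_subsingleton 1 3 (by decide)) (R.inter_subsingleton 1 5 (by decide))
    (R.inter_subsingleton 3 5 (by decide))
  have hp0 : p ∈ R.seg 0 := s19_sing_left hp02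
  have hp2 : p ∈ R.seg 2 := s19_sing_right hp02
  have hp4 : p ∈ R.seg 4 := s19_sing_right hp04
  have hq1 : q ∈ R.seg 1 := s19_sing_left hq13
  have hq3 : q ∈ R.seg 3 := s19_sing_right hq13
  have hq5 : q ∈ R.seg 5 := s19_sing_right hq15
  obtain ⟨r0, h03⟩ := s19_contact_pt R (show (0 : Fin 6) ≠ 3 by decide) (by decide)
  obtain ⟨r1, h14⟩ := s19_contact_pt R (show (1 : Fin 6) ≠ 4 by decide) (by decide)
  obtain ⟨r2, h25⟩ := s19_contact_pt R (show (2 : Fin 6) ≠ 5 by decide) (by decide)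
  have hr0_0 : r0 ∈ R.seg 0 := s19_sing_left h03
  have hr0_3 : r0 ∈ R.seg 3 := s19_sing_right h03
  have hr1_1 : r1 ∈ R.seg 1 := s19_sing_left h14
  have hr1_4 : r1 ∈ R.seg 4 := s19_sing_right h14
  have hr2_2 : r2 ∈ R.seg 2 := s19_sing_left h25
  have hr2_5 : r2 ∈ R.seg 5 := s19_sing_right h25
  have nadj : ∀ u v : Fin 6, ¬(cycleGraph 6)ᶜ.Adj u v → u ≠ v →
      ∀ x : ℤ × ℤ, x ∈ R.seg u → x ∈ R.seg v → False :=
    fun u v hn hne x h1 h2 => hn (s19_adj_of_mem R hne h1 h2)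
  have hpq : p ≠ q := fun h => nadj 0 1 (by decide) (by decide) p hp0 (by rw [h]; exact hq1)
  have hr0p : r0 ≠ p := fun h => nadj 2 3 (by decide) (by decide) p hp2 (by rw [← h]; exact hr0_3)
  have hr1p : r1 ≠ p := fun h => nadj 0 1 (by decide) (by decide) p hp0 (by rw [← h]; exact hr1_1)
  have hr2p : r2 ≠ p := fun h => nadj 4 5 (by decide) (by decide) p hp4 (by rw [← h]; exact hr2_5)
  have hr0q : r0 ≠ q := fun h => nadj 0 1 (by decide) (by decide) q (by rw [← h]; exact hr0_0) hq1
  have hr1q : r1 ≠ q := fun h => nadj 3 4 (by decide) (by decide) q hq3 (by rw [← h]; exact hr1_4)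
  have hr2q : r2 ≠ q := fun h => nadj 1 2 (by decide) (by decide) q hq1 (by rw [← h]; exact hr2_2)
  have hr01 : r0 ≠ r1 := by
    intro h
    have : r0 ∈ R.seg 4 := by rw [h]; exact hr1_4
    exact hr0p (s19_sing_eq hp04 hr0_0 this)
  have hr02 : r0 ≠ r2 := by
    intro h
    have : r0 ∈ R.seg 2 := by rw [h]; exact hr2_2
    exact hr0p (s19_sing_eq hp02 hr0_0 this)
  have hr12 : r1 ≠ r2 := by
    intro h
    have : r1 ∈ R.seg 2 := by rw [h]; exact hr2_2
    exact hr1p (s19_sing_eq hp24 this hr1_4)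
  have c0p : r0.1 = p.1 ∨ r0.2 = p.2 := s19_grid_coord (R.isSeg 0) hr0_0 hp0
  have c1p : r1.1 = p.1 ∨ r1.2 = p.2 := s19_grid_coord (R.isSeg 4) hr1_4 hp4
  have c2p : r2.1 = p.1 ∨ r2.2 = p.2 := s19_grid_coord (R.isSeg 2) hr2_2 hp2
  have c0q : r0.1 = q.1 ∨ r0.2 = q.2 := s19_grid_coord (R.isSeg 3) hr0_3 hq3
  have c1q : r1.1 = q.1 ∨ r1.2 = q.2 := s19_grid_coord (R.isSeg 1) hr1_1 hq1
  have c2q : r2.1 = q.1 ∨ r2.2 = q.2 := s19_grid_coord (R.isSeg 5) hr2_5 hq5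
  have hp42 : R.seg 4 ∩ R.seg 2 = {p} := by rw [Set.inter_comm]; exact hp24
  by_cases hx : p.1 = q.1
  · have hy : p.2 ≠ q.2 := fun h => hpq (by rw [s19_pext hx h, Prod.mk.eta])
    have f : ∀ r : ℤ × ℤ, (r.1 = p.1 ∨ r.2 = p.2) → (r.1 = q.1 ∨ r.2 = q.2) → r.1 = p.1 := by
      intro r h1 h2
      rcases h1 with h1 | h1
      · exact h1
      · rcases h2 with h2 | h2
        · omega
        · exact absurd (h1.symm.trans h2) hy
    have e0 : r0.1 = p.1 := f r0 c0p c0q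
    have e1 : r1.1 = p.1 := f r1 c1p c1q
    have e2 : r2.1 = p.1 := f r2 c2p c2q
    have t0 : r0.2 ≠ p.2 := fun h => hr0p (by rw [s19_pext e0 h, Prod.mk.eta])
    have t1 : r1.2 ≠ p.2 := fun h => hr1p (by rw [s19_pext e1 h, Prod.mk.eta])
    have t2 : r2.2 ≠ p.2 := fun h => hr2p (by rw [s19_pext e2 h, Prod.mk.eta])
    have m0 : ((p.1, r0.2) : ℤ × ℤ) ∈ R.seg 0 := (s19_pext e0 rfl) ▸ hr0_0
    have m1 : ((p.1, r1.2) : ℤ × ℤ) ∈ R.seg 4 := (s19_pext e1 rfl) ▸ hr1_4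
    have m2 : ((p.1, r2.2) : ℤ × ℤ) ∈ R.seg 2 := (s19_pext e2 rfl) ▸ hr2_2
    have tri3 : (r0.2 < p.2 ↔ r1.2 < p.2) ∨ (r0.2 < p.2 ↔ r2.2 < p.2) ∨
        (r1.2 < p.2 ↔ r2.2 < p.2) := by omega
    rcases tri3 with h | h | h
    · exact s19_sameSideV (R.isSeg 0) (R.isSeg 4) hp04 m0 m1 t0 t1 h
    · exact s19_sameSideV (R.isSeg 0) (R.isSeg 2) hp02 m0 m2 t0 t2 h
    · exact s19_sameSideV (R.isSeg 4) (R.isSeg 2) hp42 m1 m2 t1 t2 h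
  · by_cases hy : p.2 = q.2
    · have f : ∀ r : ℤ × ℤ, (r.1 = p.1 ∨ r.2 = p.2) → (r.1 = q.1 ∨ r.2 = q.2) → r.2 = p.2 := by
        intro r h1 h2
        rcases h1 with h1 | h1
        · rcases h2 with h2 | h2
          · exact absurd (h1.symm.trans h2) hx
          · omega
        · exact h1
      have e0 : r0.2 = p.2 := f r0 c0p c0q
      have e1 : r1.2 = p.2 := f r1 c1p c1q
      have e2 : r2.2 = p.2 := f r2 c2p c2q
      have t0 : r0.1 ≠ p.1 := fun h => hr0p (by rw [s19_pext h e0, Prod.mk.eta])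
      have t1 : r1.1 ≠ p.1 := fun h => hr1p (by rw [s19_pext h e1, Prod.mk.eta])
      have t2 : r2.1 ≠ p.1 := fun h => hr2p (by rw [s19_pext h e2, Prod.mk.eta])
      have m0 : ((r0.1, p.2) : ℤ × ℤ) ∈ R.seg 0 := (s19_pext rfl e0) ▸ hr0_0
      have m1 : ((r1.1, p.2) : ℤ × ℤ) ∈ R.seg 4 := (s19_pext rfl e1) ▸ hr1_4
      have m2 : ((r2.1, p.2) : ℤ × ℤ) ∈ R.seg 2 := (s19_pext rfl e2) ▸ hr2_2
      have tri3 : (r0.1 < p.1 ↔ r1.1 < p.1) ∨ (r0.1 < p.1 ↔ r2.1 < p.1) ∨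
          (r1.1 < p.1 ↔ r2.1 < p.1) := by omega
      rcases tri3 with h | h | h
      · exact s19_sameSideH (R.isSeg 0) (R.isSeg 4) hp04 m0 m1 t0 t1 h
      · exact s19_sameSideH (R.isSeg 0) (R.isSeg 2) hp02 m0 m2 t0 t2 h
      · exact s19_sameSideH (R.isSeg 4) (R.isSeg 2) hp42 m1 m2 t1 t2 h
    · have f : ∀ r : ℤ × ℤ, (r.1 = p.1 ∨ r.2 = p.2) → (r.1 = q.1 ∨ r.2 = q.2) →
          r = (p.1, q.2) ∨ r = (q.1, p.2) := by
        intro r h1 h2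
        rcases h1 with h1 | h1 <;> rcases h2 with h2 | h2
        · exact absurd (h1.symm.trans h2) hx
        · exact Or.inl (s19_pext h1 h2)
        · exact Or.inr (s19_pext h2 h1)
        · exact absurd (h1.symm.trans h2) hy
      rcases f r0 c0p c0q with e0 | e0 <;> rcases f r1 c1p c1q with e1 | e1 <;>
        rcases f r2 c2p c2q with e2 | e2
      · exact hr01 (e0.trans e1.symm)
      · exact hr01 (e0.trans e1.symm)
      · exact hr02 (e0.trans e2.symm)
      · exact hr12 (e1.trans e2.symm)
      · exact hr12 (e1.trans e2.symm)
      · exact hr02 (e0.trans e2.symm)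
      · exact hr01 (e0.trans e1.symm)
      · exact hr01 (e0.trans e1.symm)

lemma s19_K33star_adj (a b : Fin 7) : K33star.Adj a b ↔ a ≠ b ∧
    (((a.val ≤ 2 ∧ 3 ≤ b.val ∧ b.val ≤ 5 ∧ ¬(a = 2 ∧ b = 5)) ∨ (a = 6 ∧ (b = 2 ∨ b = 5))) ∨
     ((b.val ≤ 2 ∧ 3 ≤ a.val ∧ a.val ≤ 5 ∧ ¬(b = 2 ∧ a = 5)) ∨ (b = 6 ∧ (a = 2 ∨ a = 5)))) := by
  rw [K33star]
  exact SimpleGraph.fromRel_adj _ a b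

instance : DecidableRel K33star.Adj := fun a b => decidable_of_iff' _ (s19_K33star_adj a b)

lemma s19_k33A (R : ContactB0VPGRep K33star) (u v : Fin 7)
    (huv : (u = 3 ∧ v = 4) ∨ (u = 4 ∧ v = 3))
    (α β ρ cu cv c5 : ℤ)
    (l0 : ∀ p ∈ R.seg 0, p.2 = α) (l1 : ∀ p ∈ R.seg 1, p.2 = β) (l2 : ∀ p ∈ R.seg 2, p.2 = ρ)
    (lu : ∀ p ∈ R.seg u, p.1 = cu) (lv : ∀ p ∈ R.seg v, p.1 = cv) (l5 : ∀ p ∈ R.seg 5, p.1 = c5)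
    (hord : (cu < cv ∧ cv < c5) ∨ (c5 < cv ∧ cv < cu)) : False := by
  have d0u : (0 : Fin 7) ≠ u := by rcases huv with ⟨rfl, rfl⟩ | ⟨rfl, rfl⟩ <;> decide
  have d0v : (0 : Fin 7) ≠ v := by rcases huv with ⟨rfl, rfl⟩ | ⟨rfl, rfl⟩ <;> decide
  have d1u : (1 : Fin 7) ≠ u := by rcases huv with ⟨rfl, rfl⟩ | ⟨rfl, rfl⟩ <;> decide
  have d1v : (1 : Fin 7) ≠ v := by rcases huv with ⟨rfl, rfl⟩ | ⟨rfl, rfl⟩ <;> decide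
  have d2u : (2 : Fin 7) ≠ u := by rcases huv with ⟨rfl, rfl⟩ | ⟨rfl, rfl⟩ <;> decide
  have d2v : (2 : Fin 7) ≠ v := by rcases huv with ⟨rfl, rfl⟩ | ⟨rfl, rfl⟩ <;> decide
  have dv6 : v ≠ 6 := by rcases huv with ⟨rfl, rfl⟩ | ⟨rfl, rfl⟩ <;> decide
  have a0u : K33star.Adj 0 u := by rcases huv with ⟨rfl, rfl⟩ | ⟨rfl, rfl⟩ <;> decide
  have a0v : K33star.Adj 0 v := by rcases huv with ⟨rfl, rfl⟩ | ⟨rfl, rfl⟩ <;> decide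
  have a1u : K33star.Adj 1 u := by rcases huv with ⟨rfl, rfl⟩ | ⟨rfl, rfl⟩ <;> decide
  have a1v : K33star.Adj 1 v := by rcases huv with ⟨rfl, rfl⟩ | ⟨rfl, rfl⟩ <;> decide
  have a2u : K33star.Adj 2 u := by rcases huv with ⟨rfl, rfl⟩ | ⟨rfl, rfl⟩ <;> decide
  have a2v : K33star.Adj 2 v := by rcases huv with ⟨rfl, rfl⟩ | ⟨rfl, rfl⟩ <;> decide
  have nv6 : ¬ K33star.Adj v 6 := by rcases huv with ⟨rfl, rfl⟩ | ⟨rfl, rfl⟩ <;> decide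
  -- contact points with full coordinates
  obtain ⟨r0u, h0u⟩ := s19_contact_pt R d0u a0u
  have e0u : r0u = (cu, α) := s19_pext (lu _ (s19_sing_right h0u)) (l0 _ (s19_sing_left h0u))
  have m0u_0 : ((cu, α) : ℤ × ℤ) ∈ R.seg 0 := e0u ▸ s19_sing_left h0u
  have m0u_u : ((cu, α) : ℤ × ℤ) ∈ R.seg u := e0u ▸ s19_sing_right h0u
  obtain ⟨r0v, h0v⟩ := s19_contact_pt R d0v a0v
  have e0v : r0v = (cv, α) := s19_pext (lv _ (s19_sing_right h0v)) (l0 _ (s19_sing_left h0v))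
  have m0v_0 : ((cv, α) : ℤ × ℤ) ∈ R.seg 0 := e0v ▸ s19_sing_left h0v
  have m0v_v : ((cv, α) : ℤ × ℤ) ∈ R.seg v := e0v ▸ s19_sing_right h0v
  obtain ⟨r05, h05⟩ := s19_contact_pt R (by decide) (by decide : K33star.Adj 0 5)
  have e05 : r05 = (c5, α) := s19_pext (l5 _ (s19_sing_right h05)) (l0 _ (s19_sing_left h05))
  have m05_0 : ((c5, α) : ℤ × ℤ) ∈ R.seg 0 := e05 ▸ s19_sing_left h05
  have m05_5 : ((c5, α) : ℤ × ℤ) ∈ R.seg 5 := e05 ▸ s19_sing_right h05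
  obtain ⟨r1u, h1u⟩ := s19_contact_pt R d1u a1u
  have e1u : r1u = (cu, β) := s19_pext (lu _ (s19_sing_right h1u)) (l1 _ (s19_sing_left h1u))
  have m1u_1 : ((cu, β) : ℤ × ℤ) ∈ R.seg 1 := e1u ▸ s19_sing_left h1u
  have m1u_u : ((cu, β) : ℤ × ℤ) ∈ R.seg u := e1u ▸ s19_sing_right h1u
  obtain ⟨r1v, h1v⟩ := s19_contact_pt R d1v a1v
  have e1v : r1v = (cv, β) := s19_pext (lv _ (s19_sing_right h1v)) (l1 _ (s19_sing_left h1v))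
  have m1v_1 : ((cv, β) : ℤ × ℤ) ∈ R.seg 1 := e1v ▸ s19_sing_left h1v
  have m1v_v : ((cv, β) : ℤ × ℤ) ∈ R.seg v := e1v ▸ s19_sing_right h1v
  obtain ⟨r15, h15⟩ := s19_contact_pt R (by decide) (by decide : K33star.Adj 1 5)
  have e15 : r15 = (c5, β) := s19_pext (l5 _ (s19_sing_right h15)) (l1 _ (s19_sing_left h15))
  have m15_1 : ((c5, β) : ℤ × ℤ) ∈ R.seg 1 := e15 ▸ s19_sing_left h15
  have m15_5 : ((c5, β) : ℤ × ℤ) ∈ R.seg 5 := e15 ▸ s19_sing_right h15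
  obtain ⟨r2u, h2u⟩ := s19_contact_pt R d2u a2u
  have e2u : r2u = (cu, ρ) := s19_pext (lu _ (s19_sing_right h2u)) (l2 _ (s19_sing_left h2u))
  have m2u_2 : ((cu, ρ) : ℤ × ℤ) ∈ R.seg 2 := e2u ▸ s19_sing_left h2u
  have m2u_u : ((cu, ρ) : ℤ × ℤ) ∈ R.seg u := e2u ▸ s19_sing_right h2u
  obtain ⟨r2v, h2v⟩ := s19_contact_pt R d2v a2v
  have e2v : r2v = (cv, ρ) := s19_pext (lv _ (s19_sing_right h2v)) (l2 _ (s19_sing_left h2v))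
  have m2v_2 : ((cv, ρ) : ℤ × ℤ) ∈ R.seg 2 := e2v ▸ s19_sing_left h2v
  have m2v_v : ((cv, ρ) : ℤ × ℤ) ∈ R.seg v := e2v ▸ s19_sing_right h2v
  obtain ⟨r26, h26⟩ := s19_contact_pt R (by decide) (by decide : K33star.Adj 2 6)
  have hr26_2 : r26 ∈ R.seg 2 := s19_sing_left h26
  have hr26_6 : r26 ∈ R.seg 6 := s19_sing_right h26
  obtain ⟨r56, h56⟩ := s19_contact_pt R (by decide) (by decide : K33star.Adj 5 6)
  have hr56_5 : r56 ∈ R.seg 5 := s19_sing_left h56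
  have hr56_6 : r56 ∈ R.seg 6 := s19_sing_right h56
  -- distinctness of the lines
  have hαβ : α ≠ β := by
    intro h; subst h
    exact (by decide : ¬ K33star.Adj 0 1) (s19_adj_of_mem R (by decide) m0v_0 m1v_1)
  have hρα : ρ ≠ α := by
    intro h; subst h
    exact (by decide : ¬ K33star.Adj 0 2) (s19_adj_of_mem R (by decide) m0u_0 m2u_2)
  have hρβ : ρ ≠ β := by
    intro h; subst h
    exact (by decide : ¬ K33star.Adj 1 2) (s19_adj_of_mem R (by decide) m1u_1 m2u_2)
  have hcucv : cu ≠ cv := by rcases hord with ⟨h1, h2⟩ | ⟨h1, h2⟩ <;> omega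
  -- endpoints of S_v at (cv, α) and (cv, β)
  obtain ⟨A, B, hA, hB, hAcv, hcvB⟩ :
      ∃ A B : ℤ, ((A, α) : ℤ × ℤ) ∈ R.seg 0 ∧ ((B, α) : ℤ × ℤ) ∈ R.seg 0 ∧ A < cv ∧ cv < B := by
    rcases hord with ⟨h1, h2⟩ | ⟨h1, h2⟩
    · exact ⟨cu, c5, m0u_0, m05_0, h1, h2⟩
    · exact ⟨c5, cu, m05_0, m0u_0, h1, h2⟩
  have evα : IsEndpointOf (cv, α) (R.seg v) := by
    rcases R.contact 0 v d0v _ ⟨m0v_0, m0v_v⟩ with hE | hE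
    · exact (s19_ep_not_interior_h hE hA hB hAcv hcvB).elim
    · exact hE
  obtain ⟨A', B', hA', hB', hAcv', hcvB'⟩ :
      ∃ A B : ℤ, ((A, β) : ℤ × ℤ) ∈ R.seg 1 ∧ ((B, β) : ℤ × ℤ) ∈ R.seg 1 ∧ A < cv ∧ cv < B := by
    rcases hord with ⟨h1, h2⟩ | ⟨h1, h2⟩
    · exact ⟨cu, c5, m1u_1, m15_1, h1, h2⟩
    · exact ⟨c5, cu, m15_1, m1u_1, h1, h2⟩
  have evβ : IsEndpointOf (cv, β) (R.seg v) := by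
    rcases R.contact 1 v d1v _ ⟨m1v_1, m1v_v⟩ with hE | hE
    · exact (s19_ep_not_interior_h hE hA' hB' hAcv' hcvB').elim
    · exact hE
  -- S_v lies between rows α and β
  have hbv : ∀ q ∈ R.seg v, min α β ≤ q.2 ∧ q.2 ≤ max α β := by
    intro qq hqq
    have hne : ((cv, α) : ℤ × ℤ) ≠ (cv, β) := fun h => hαβ (congrArg Prod.snd h)
    exact (s19_endpoints_bound evα evβ hne hqq).2
  have hρlo : min α β ≤ ρ := (hbv _ m2v_v).1
  have hρhi : ρ ≤ max α β := (hbv _ m2v_v).2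
  have hρlo' : min α β < ρ := by rcases le_total α β with h | h <;>
    [rw [min_eq_left h] at hρlo ⊢; rw [min_eq_right h] at hρlo ⊢] <;> omega
  have hρhi' : ρ < max α β := by rcases le_total α β with h | h <;>
    [rw [max_eq_right h] at hρhi ⊢; rw [max_eq_left h] at hρhi ⊢] <;> omega
  -- memberships of min/max rows in S_u and S_v
  obtain ⟨mu_lo, mu_hi⟩ : ((cu, min α β) : ℤ × ℤ) ∈ R.seg u ∧
      ((cu, max α β) : ℤ × ℤ) ∈ R.seg u := by
    rcases le_total α β with h | h
    · rw [min_eq_left h, max_eq_right h]; exact ⟨m0u_u, m1u_u⟩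
    · rw [min_eq_right h, max_eq_left h]; exact ⟨m1u_u, m0u_u⟩
  obtain ⟨mv_lo, mv_hi⟩ : ((cv, min α β) : ℤ × ℤ) ∈ R.seg v ∧
      ((cv, max α β) : ℤ × ℤ) ∈ R.seg v := by
    rcases le_total α β with h | h
    · rw [min_eq_left h, max_eq_right h]; exact ⟨m0v_v, m1v_v⟩
    · rw [min_eq_right h, max_eq_left h]; exact ⟨m1v_v, m0v_v⟩
  -- endpoints of S_2 at (cu, ρ) and (cv, ρ)
  have e2v' : IsEndpointOf (cv, ρ) (R.seg 2) := by
    rcases R.contact 2 v d2v _ ⟨m2v_2, m2v_v⟩ with hE | hE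
    · exact hE
    · exact (s19_ep_not_interior_v hE mv_lo mv_hi hρlo' hρhi').elim
  have e2u' : IsEndpointOf (cu, ρ) (R.seg 2) := by
    rcases R.contact 2 u d2u _ ⟨m2u_2, m2u_u⟩ with hE | hE
    · exact hE
    · exact (s19_ep_not_interior_v hE mu_lo mu_hi hρlo' hρhi').elim
  -- S_2 lies between columns cu and cv
  have hb2 : ∀ q ∈ R.seg 2, min cu cv ≤ q.1 ∧ q.1 ≤ max cu cv := by
    intro qq hqq
    have hne : ((cu, ρ) : ℤ × ℤ) ≠ (cv, ρ) := fun h => hcucv (congrArg Prod.fst h)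
    exact (s19_endpoints_bound e2u' e2v' hne hqq).1
  have hg_lo : min cu cv ≤ r26.1 := (hb2 _ hr26_2).1
  have hg_hi : r26.1 ≤ max cu cv := (hb2 _ hr26_2).2
  have hg5 : r26.1 ≠ c5 := by
    rcases hord with ⟨h1, h2⟩ | ⟨h1, h2⟩ <;>
      [rw [max_eq_right (le_of_lt h1)] at hg_hi; rw [min_eq_right (le_of_lt h2)] at hg_lo] <;>
      omega
  have er26' : r26 = (r26.1, ρ) := s19_pext rfl (l2 _ hr26_2)
  have er56' : r56 = (c5, r56.2) := s19_pext (l5 _ hr56_5) rfl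
  have m26_6 : ((r26.1, ρ) : ℤ × ℤ) ∈ R.seg 6 := er26' ▸ hr26_6
  have m56_6 : ((c5, r56.2) : ℤ × ℤ) ∈ R.seg 6 := er56' ▸ hr56_6
  have hρt : ρ = r56.2 := s19_same_row (R.isSeg 6) m26_6 m56_6 hg5
  have m56_6' : ((c5, ρ) : ℤ × ℤ) ∈ R.seg 6 := by rw [hρt]; exact m56_6
  have mcv6 : ((cv, ρ) : ℤ × ℤ) ∈ R.seg 6 := by
    rcases hord with ⟨h1, h2⟩ | ⟨h1, h2⟩
    · have : r26.1 ≤ cv := by rw [max_eq_right (le_of_lt h1)] at hg_hi; exact hg_hi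
      exact s19_hspan (R.isSeg 6) m26_6 m56_6' this (le_of_lt h2)
    · have : cv ≤ r26.1 := by rw [min_eq_right (le_of_lt h2)] at hg_lo; exact hg_lo
      exact s19_hspan (R.isSeg 6) m56_6' m26_6 (le_of_lt h1) this
  exact nv6 (s19_adj_of_mem R dv6 m2v_v mcv6)

lemma s19_k33B (R : ContactB0VPGRep K33star) (u v : Fin 7)
    (huv : (u = 3 ∧ v = 4) ∨ (u = 4 ∧ v = 3))
    (α β ρ cu cv c5 : ℤ)
    (l0 : ∀ p ∈ R.seg 0, p.2 = α) (l1 : ∀ p ∈ R.seg 1, p.2 = β) (l2 : ∀ p ∈ R.seg 2, p.2 = ρ)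
    (lu : ∀ p ∈ R.seg u, p.1 = cu) (lv : ∀ p ∈ R.seg v, p.1 = cv) (l5 : ∀ p ∈ R.seg 5, p.1 = c5)
    (hord : cu < c5 ∧ c5 < cv) : False := by
  have d0u : (0 : Fin 7) ≠ u := by rcases huv with ⟨rfl, rfl⟩ | ⟨rfl, rfl⟩ <;> decide
  have d0v : (0 : Fin 7) ≠ v := by rcases huv with ⟨rfl, rfl⟩ | ⟨rfl, rfl⟩ <;> decide
  have d1u : (1 : Fin 7) ≠ u := by rcases huv with ⟨rfl, rfl⟩ | ⟨rfl, rfl⟩ <;> decide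
  have d1v : (1 : Fin 7) ≠ v := by rcases huv with ⟨rfl, rfl⟩ | ⟨rfl, rfl⟩ <;> decide
  have d2u : (2 : Fin 7) ≠ u := by rcases huv with ⟨rfl, rfl⟩ | ⟨rfl, rfl⟩ <;> decide
  have d2v : (2 : Fin 7) ≠ v := by rcases huv with ⟨rfl, rfl⟩ | ⟨rfl, rfl⟩ <;> decide
  have a0u : K33star.Adj 0 u := by rcases huv with ⟨rfl, rfl⟩ | ⟨rfl, rfl⟩ <;> decide
  have a0v : K33star.Adj 0 v := by rcases huv with ⟨rfl, rfl⟩ | ⟨rfl, rfl⟩ <;> decide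
  have a1u : K33star.Adj 1 u := by rcases huv with ⟨rfl, rfl⟩ | ⟨rfl, rfl⟩ <;> decide
  have a1v : K33star.Adj 1 v := by rcases huv with ⟨rfl, rfl⟩ | ⟨rfl, rfl⟩ <;> decide
  have a2u : K33star.Adj 2 u := by rcases huv with ⟨rfl, rfl⟩ | ⟨rfl, rfl⟩ <;> decide
  have a2v : K33star.Adj 2 v := by rcases huv with ⟨rfl, rfl⟩ | ⟨rfl, rfl⟩ <;> decide
  -- contact points with full coordinates
  obtain ⟨r0u, h0u⟩ := s19_contact_pt R d0u a0u
  have e0u : r0u = (cu, α) := s19_pext (lu _ (s19_sing_right h0u)) (l0 _ (s19_sing_left h0u))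
  have m0u_0 : ((cu, α) : ℤ × ℤ) ∈ R.seg 0 := e0u ▸ s19_sing_left h0u
  obtain ⟨r0v, h0v⟩ := s19_contact_pt R d0v a0v
  have e0v : r0v = (cv, α) := s19_pext (lv _ (s19_sing_right h0v)) (l0 _ (s19_sing_left h0v))
  have m0v_0 : ((cv, α) : ℤ × ℤ) ∈ R.seg 0 := e0v ▸ s19_sing_left h0v
  obtain ⟨r05, h05⟩ := s19_contact_pt R (by decide) (by decide : K33star.Adj 0 5)
  have e05 : r05 = (c5, α) := s19_pext (l5 _ (s19_sing_right h05)) (l0 _ (s19_sing_left h05))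
  have m05_0 : ((c5, α) : ℤ × ℤ) ∈ R.seg 0 := e05 ▸ s19_sing_left h05
  have m05_5 : ((c5, α) : ℤ × ℤ) ∈ R.seg 5 := e05 ▸ s19_sing_right h05
  obtain ⟨r1u, h1u⟩ := s19_contact_pt R d1u a1u
  have e1u : r1u = (cu, β) := s19_pext (lu _ (s19_sing_right h1u)) (l1 _ (s19_sing_left h1u))
  have m1u_1 : ((cu, β) : ℤ × ℤ) ∈ R.seg 1 := e1u ▸ s19_sing_left h1u
  obtain ⟨r1v, h1v⟩ := s19_contact_pt R d1v a1v
  have e1v : r1v = (cv, β) := s19_pext (lv _ (s19_sing_right h1v)) (l1 _ (s19_sing_left h1v))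
  have m1v_1 : ((cv, β) : ℤ × ℤ) ∈ R.seg 1 := e1v ▸ s19_sing_left h1v
  obtain ⟨r15, h15⟩ := s19_contact_pt R (by decide) (by decide : K33star.Adj 1 5)
  have e15 : r15 = (c5, β) := s19_pext (l5 _ (s19_sing_right h15)) (l1 _ (s19_sing_left h15))
  have m15_1 : ((c5, β) : ℤ × ℤ) ∈ R.seg 1 := e15 ▸ s19_sing_left h15
  have m15_5 : ((c5, β) : ℤ × ℤ) ∈ R.seg 5 := e15 ▸ s19_sing_right h15
  obtain ⟨r2u, h2u⟩ := s19_contact_pt R d2u a2u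
  have e2u : r2u = (cu, ρ) := s19_pext (lu _ (s19_sing_right h2u)) (l2 _ (s19_sing_left h2u))
  have m2u_2 : ((cu, ρ) : ℤ × ℤ) ∈ R.seg 2 := e2u ▸ s19_sing_left h2u
  obtain ⟨r2v, h2v⟩ := s19_contact_pt R d2v a2v
  have e2v : r2v = (cv, ρ) := s19_pext (lv _ (s19_sing_right h2v)) (l2 _ (s19_sing_left h2v))
  have m2v_2 : ((cv, ρ) : ℤ × ℤ) ∈ R.seg 2 := e2v ▸ s19_sing_left h2v
  obtain ⟨r26, h26⟩ := s19_contact_pt R (by decide) (by decide : K33star.Adj 2 6)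
  have hr26_2 : r26 ∈ R.seg 2 := s19_sing_left h26
  have hr26_6 : r26 ∈ R.seg 6 := s19_sing_right h26
  obtain ⟨r56, h56⟩ := s19_contact_pt R (by decide) (by decide : K33star.Adj 5 6)
  have hr56_5 : r56 ∈ R.seg 5 := s19_sing_left h56
  have hr56_6 : r56 ∈ R.seg 6 := s19_sing_right h56
  -- distinctness of the lines
  have hαβ : α ≠ β := by
    intro h; subst h
    exact (by decide : ¬ K33star.Adj 0 1) (s19_adj_of_mem R (by decide) m0v_0 m1v_1)
  have hρα : ρ ≠ α := by
    intro h; subst h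
    exact (by decide : ¬ K33star.Adj 0 2) (s19_adj_of_mem R (by decide) m0u_0 m2u_2)
  have hρβ : ρ ≠ β := by
    intro h; subst h
    exact (by decide : ¬ K33star.Adj 1 2) (s19_adj_of_mem R (by decide) m1u_1 m2u_2)
  -- endpoints of S_5 at (c5, α) and (c5, β)
  have e5α : IsEndpointOf (c5, α) (R.seg 5) := by
    rcases R.contact 0 5 (by decide) _ ⟨m05_0, m05_5⟩ with hE | hE
    · exact (s19_ep_not_interior_h hE m0u_0 m0v_0 hord.1 hord.2).elim
    · exact hE
  have e5β : IsEndpointOf (c5, β) (R.seg 5) := by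
    rcases R.contact 1 5 (by decide) _ ⟨m15_1, m15_5⟩ with hE | hE
    · exact (s19_ep_not_interior_h hE m1u_1 m1v_1 hord.1 hord.2).elim
    · exact hE
  -- S_5 lies between rows α and β
  have hb5 : ∀ q ∈ R.seg 5, min α β ≤ q.2 ∧ q.2 ≤ max α β := by
    intro qq hqq
    have hne : ((c5, α) : ℤ × ℤ) ≠ (c5, β) := fun h => hαβ (congrArg Prod.snd h)
    exact (s19_endpoints_bound e5α e5β hne hqq).2
  -- (c5, ρ) ∈ S_2
  have m2_c5 : ((c5, ρ) : ℤ × ℤ) ∈ R.seg 2 :=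
    s19_hspan (R.isSeg 2) m2u_2 m2v_2 (le_of_lt hord.1) (le_of_lt hord.2)
  obtain ⟨m5_lo, m5_hi⟩ : ((c5, min α β) : ℤ × ℤ) ∈ R.seg 5 ∧
      ((c5, max α β) : ℤ × ℤ) ∈ R.seg 5 := by
    rcases le_total α β with h | h
    · rw [min_eq_left h, max_eq_right h]; exact ⟨m05_5, m15_5⟩
    · rw [min_eq_right h, max_eq_left h]; exact ⟨m15_5, m05_5⟩
  have er26' : r26 = (r26.1, ρ) := s19_pext rfl (l2 _ hr26_2)
  have er56' : r56 = (c5, r56.2) := s19_pext (l5 _ hr56_5) rfl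
  have m26_6 : ((r26.1, ρ) : ℤ × ℤ) ∈ R.seg 6 := er26' ▸ hr26_6
  have m56_6 : ((c5, r56.2) : ℤ × ℤ) ∈ R.seg 6 := er56' ▸ hr56_6
  have ht_lo : min α β ≤ r56.2 := (hb5 _ hr56_5).1
  have ht_hi : r56.2 ≤ max α β := (hb5 _ hr56_5).2
  have hcase : ρ < min α β ∨ (min α β ≤ ρ ∧ ρ ≤ max α β) ∨ max α β < ρ := by omega
  rcases hcase with hρ | hρ | hρ
  · -- ρ below: S6 is vertical on column c5, passes through row min α β
    have hne_y : ρ ≠ r56.2 := by omega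
    have hx : r26.1 = c5 := s19_same_col (R.isSeg 6) m26_6 m56_6 hne_y
    have m6ρ : ((c5, ρ) : ℤ × ℤ) ∈ R.seg 6 := by rw [← hx]; exact m26_6
    have m6min : ((c5, min α β) : ℤ × ℤ) ∈ R.seg 6 :=
      s19_vspan (R.isSeg 6) m6ρ m56_6 (le_of_lt hρ) (by omega)
    rcases le_total α β with hab | hab
    · have hmem : ((c5, α) : ℤ × ℤ) ∈ R.seg 6 := by rwa [min_eq_left hab] at m6min
      exact (by decide : ¬ K33star.Adj 0 6) (s19_adj_of_mem R (by decide) m05_0 hmem)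
    · have hmem : ((c5, β) : ℤ × ℤ) ∈ R.seg 6 := by rwa [min_eq_right hab] at m6min
      exact (by decide : ¬ K33star.Adj 1 6) (s19_adj_of_mem R (by decide) m15_1 hmem)
  · -- ρ between: S2 meets S5
    have m5ρ : ((c5, ρ) : ℤ × ℤ) ∈ R.seg 5 := s19_vspan (R.isSeg 5) m5_lo m5_hi hρ.1 hρ.2
    exact (by decide : ¬ K33star.Adj 2 5) (s19_adj_of_mem R (by decide) m2_c5 m5ρ)
  · -- ρ above
    have hne_y : ρ ≠ r56.2 := by omega
    have hx : r26.1 = c5 := s19_same_col (R.isSeg 6) m26_6 m56_6 hne_y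
    have m6ρ : ((c5, ρ) : ℤ × ℤ) ∈ R.seg 6 := by rw [← hx]; exact m26_6
    have m6max : ((c5, max α β) : ℤ × ℤ) ∈ R.seg 6 :=
      s19_vspan (R.isSeg 6) m56_6 m6ρ (by omega) (le_of_lt hρ)
    rcases le_total α β with hab | hab
    · have hmem : ((c5, β) : ℤ × ℤ) ∈ R.seg 6 := by rwa [max_eq_right hab] at m6max
      exact (by decide : ¬ K33star.Adj 1 6) (s19_adj_of_mem R (by decide) m15_1 hmem)
    · have hmem : ((c5, α) : ℤ × ℤ) ∈ R.seg 6 := by rwa [max_eq_left hab] at m6max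
      exact (by decide : ¬ K33star.Adj 0 6) (s19_adj_of_mem R (by decide) m05_0 hmem)

lemma s19_k33_master (R : ContactB0VPGRep K33star) (h0 : IsHorizSeg (R.seg 0)) : False := by
  obtain ⟨α, a0, b0, hab0, hS0⟩ := h0
  have l0 : ∀ p ∈ R.seg 0, p.2 = α := fun p hp => by rw [hS0] at hp; exact hp.1
  obtain ⟨r03, h03⟩ := s19_contact_pt R (by decide) (by decide : K33star.Adj 0 3)
  obtain ⟨r04, h04⟩ := s19_contact_pt R (by decide) (by decide : K33star.Adj 0 4)
  obtain ⟨r05, h05⟩ := s19_contact_pt R (by decide) (by decide : K33star.Adj 0 5)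
  obtain ⟨r13, h13⟩ := s19_contact_pt R (by decide) (by decide : K33star.Adj 1 3)
  obtain ⟨r14, h14⟩ := s19_contact_pt R (by decide) (by decide : K33star.Adj 1 4)
  obtain ⟨r15, h15⟩ := s19_contact_pt R (by decide) (by decide : K33star.Adj 1 5)
  -- S1 must be horizontal (with full interval data)
  obtain ⟨β, a1, b1, hab1, hS1⟩ : IsHorizSeg (R.seg 1) := by
    rcases R.isSeg 1 with h | ⟨γ, c1, d1, hcd1, hS1⟩
    · exact h
    · exfalso
      have hcol : ∀ p ∈ R.seg 1, p.1 = γ := fun p hp => by rw [hS1] at hp; exact hp.1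
      have key : ∀ i : Fin 7, ∀ r0i r1i : ℤ × ℤ, R.seg 0 ∩ R.seg i = {r0i} →
          R.seg 1 ∩ R.seg i = {r1i} → ((γ, α) : ℤ × ℤ) ∈ R.seg i := by
        intro i r0i r1i h0i h1i
        rcases s19_grid_line (R.isSeg i) with ⟨yi, hyi⟩ | ⟨xi, hxi⟩
        · have e1 : yi = α := (hyi _ (s19_sing_right h0i)).symm.trans (l0 _ (s19_sing_left h0i))
          have e2 : r1i = (γ, α) :=
            s19_pext (hcol _ (s19_sing_left h1i)) ((hyi _ (s19_sing_right h1i)).trans e1)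
          exact e2 ▸ s19_sing_right h1i
        · have e1 : xi = γ := (hxi _ (s19_sing_right h1i)).symm.trans (hcol _ (s19_sing_left h1i))
          have e2 : r0i = (γ, α) :=
            s19_pext ((hxi _ (s19_sing_right h0i)).trans e1) (l0 _ (s19_sing_left h0i))
          exact e2 ▸ s19_sing_right h0i
      have m3 := key 3 r03 r13 h03 h13
      have m4 := key 4 r04 r14 h04 h14
      exact (by decide : ¬ K33star.Adj 3 4) (s19_adj_of_mem R (by decide) m3 m4)
  have l1 : ∀ p ∈ R.seg 1, p.2 = β := fun p hp => by rw [hS1] at hp; exact hp.1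
  -- α ≠ β
  have hαβ : α ≠ β := by
    intro h
    subst h
    -- S0 and S1 are disjoint intervals on the same row; every S_i (i=3,4) spans the gap
    have hdisj : ∀ pt : ℤ × ℤ, pt ∈ R.seg 0 → pt ∈ R.seg 1 → False := fun pt h1 h2 =>
      (by decide : ¬ K33star.Adj 0 1) (s19_adj_of_mem R (by decide) h1 h2)
    have hb03 : a0 ≤ r03.1 ∧ r03.1 ≤ b0 := by
      have := s19_sing_left h03; rw [hS0] at this; exact ⟨this.2.1, this.2.2⟩
    have hb04 : a0 ≤ r04.1 ∧ r04.1 ≤ b0 := by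
      have := s19_sing_left h04; rw [hS0] at this; exact ⟨this.2.1, this.2.2⟩
    have hb13 : a1 ≤ r13.1 ∧ r13.1 ≤ b1 := by
      have := s19_sing_left h13; rw [hS1] at this; exact ⟨this.2.1, this.2.2⟩
    have hb14 : a1 ≤ r14.1 ∧ r14.1 ≤ b1 := by
      have := s19_sing_left h14; rw [hS1] at this; exact ⟨this.2.1, this.2.2⟩
    have horder : b0 < a1 ∨ b1 < a0 := by
      by_contra h
      push_neg at h
      exact hdisj (max a0 a1, α) (by rw [hS0]; exact ⟨rfl, le_max_left _ _, by omega⟩)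
        (by rw [hS1]; exact ⟨rfl, le_max_right _ _, by omega⟩)
    have e03 : r03 = (r03.1, α) := s19_pext rfl (l0 _ (s19_sing_left h03))
    have e04 : r04 = (r04.1, α) := s19_pext rfl (l0 _ (s19_sing_left h04))
    have e13 : r13 = (r13.1, α) := s19_pext rfl (l1 _ (s19_sing_left h13))
    have e14 : r14 = (r14.1, α) := s19_pext rfl (l1 _ (s19_sing_left h14))
    have m03_3 : ((r03.1, α) : ℤ × ℤ) ∈ R.seg 3 := e03 ▸ s19_sing_right h03
    have m04_4 : ((r04.1, α) : ℤ × ℤ) ∈ R.seg 4 := e04 ▸ s19_sing_right h04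
    have m13_3 : ((r13.1, α) : ℤ × ℤ) ∈ R.seg 3 := e13 ▸ s19_sing_right h13
    have m14_4 : ((r14.1, α) : ℤ × ℤ) ∈ R.seg 4 := e14 ▸ s19_sing_right h14
    rcases horder with ho | ho
    · have c3 : ((b0, α) : ℤ × ℤ) ∈ R.seg 3 :=
        s19_hspan (R.isSeg 3) m03_3 m13_3 hb03.2 (by omega)
      have c4 : ((b0, α) : ℤ × ℤ) ∈ R.seg 4 :=
        s19_hspan (R.isSeg 4) m04_4 m14_4 hb04.2 (by omega)
      exact (by decide : ¬ K33star.Adj 3 4) (s19_adj_of_mem R (by decide) c3 c4)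
    · have c3 : ((b1, α) : ℤ × ℤ) ∈ R.seg 3 :=
        s19_hspan (R.isSeg 3) m13_3 m03_3 hb13.2 (by omega)
      have c4 : ((b1, α) : ℤ × ℤ) ∈ R.seg 4 :=
        s19_hspan (R.isSeg 4) m14_4 m04_4 hb14.2 (by omega)
      exact (by decide : ¬ K33star.Adj 3 4) (s19_adj_of_mem R (by decide) c3 c4)
  -- each of S3, S4, S5 is vertical
  have colfact : ∀ i : Fin 7, ∀ r0i r1i : ℤ × ℤ, R.seg 0 ∩ R.seg i = {r0i} →
      R.seg 1 ∩ R.seg i = {r1i} →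
      ∃ c : ℤ, r0i = (c, α) ∧ r1i = (c, β) ∧ ∀ p ∈ R.seg i, p.1 = c := by
    intro i r0i r1i h0i h1i
    rcases s19_grid_line (R.isSeg i) with ⟨yi, hyi⟩ | ⟨xi, hxi⟩
    · exfalso
      apply hαβ
      have e1 : α = yi := (l0 _ (s19_sing_left h0i)).symm.trans (hyi _ (s19_sing_right h0i))
      have e2 : β = yi := (l1 _ (s19_sing_left h1i)).symm.trans (hyi _ (s19_sing_right h1i))
      omega
    · exact ⟨xi, s19_pext (hxi _ (s19_sing_right h0i)) (l0 _ (s19_sing_left h0i)),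
        s19_pext (hxi _ (s19_sing_right h1i)) (l1 _ (s19_sing_left h1i)), hxi⟩
  obtain ⟨c3, e03, e13, l3⟩ := colfact 3 r03 r13 h03 h13
  obtain ⟨c4, e04, e14, l4⟩ := colfact 4 r04 r14 h04 h14
  obtain ⟨c5, e05, e15, l5⟩ := colfact 5 r05 r15 h05 h15
  -- columns are pairwise distinct
  have m03_3 : ((c3, α) : ℤ × ℤ) ∈ R.seg 3 := e03 ▸ s19_sing_right h03
  have m04_4 : ((c4, α) : ℤ × ℤ) ∈ R.seg 4 := e04 ▸ s19_sing_right h04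
  have m05_5 : ((c5, α) : ℤ × ℤ) ∈ R.seg 5 := e05 ▸ s19_sing_right h05
  have hc34 : c3 ≠ c4 := by
    intro h; subst h
    exact (by decide : ¬ K33star.Adj 3 4) (s19_adj_of_mem R (by decide) m03_3 m04_4)
  have hc35 : c3 ≠ c5 := by
    intro h; subst h
    exact (by decide : ¬ K33star.Adj 3 5) (s19_adj_of_mem R (by decide) m03_3 m05_5)
  have hc45 : c4 ≠ c5 := by
    intro h; subst h
    exact (by decide : ¬ K33star.Adj 4 5) (s19_adj_of_mem R (by decide) m04_4 m05_5)
  -- S2 is horizontal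
  obtain ⟨r23, h23⟩ := s19_contact_pt R (by decide) (by decide : K33star.Adj 2 3)
  obtain ⟨r24, h24⟩ := s19_contact_pt R (by decide) (by decide : K33star.Adj 2 4)
  obtain ⟨ρ, l2⟩ : ∃ ρ, ∀ p ∈ R.seg 2, p.2 = ρ := by
    rcases s19_grid_line (R.isSeg 2) with ⟨ρ, h⟩ | ⟨x2, hx2⟩
    · exact ⟨ρ, h⟩
    · exfalso
      apply hc34
      have e1 : c3 = x2 := (l3 _ (s19_sing_right h23)).symm.trans (hx2 _ (s19_sing_left h23))
      have e2 : c4 = x2 := (l4 _ (s19_sing_right h24)).symm.trans (hx2 _ (s19_sing_left h24))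
      omega
  -- six possible orders
  have hsplit : (c3 < c4 ∧ c4 < c5) ∨ (c4 < c3 ∧ c3 < c5) ∨ (c5 < c4 ∧ c4 < c3) ∨
      (c5 < c3 ∧ c3 < c4) ∨ (c3 < c5 ∧ c5 < c4) ∨ (c4 < c5 ∧ c5 < c3) := by omega
  rcases hsplit with h | h | h | h | h | h
  · exact s19_k33A R 3 4 (Or.inl ⟨rfl, rfl⟩) α β ρ c3 c4 c5 l0 l1 l2 l3 l4 l5 (Or.inl h)
  · exact s19_k33A R 4 3 (Or.inr ⟨rfl, rfl⟩) α β ρ c4 c3 c5 l0 l1 l2 l4 l3 l5 (Or.inl h)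
  · exact s19_k33A R 3 4 (Or.inl ⟨rfl, rfl⟩) α β ρ c3 c4 c5 l0 l1 l2 l3 l4 l5 (Or.inr h)
  · exact s19_k33A R 4 3 (Or.inr ⟨rfl, rfl⟩) α β ρ c4 c3 c5 l0 l1 l2 l4 l3 l5 (Or.inr h)
  · exact s19_k33B R 3 4 (Or.inl ⟨rfl, rfl⟩) α β ρ c3 c4 c5 l0 l1 l2 l3 l4 l5 h
  · exact s19_k33B R 4 3 (Or.inr ⟨rfl, rfl⟩) α β ρ c4 c3 c5 l0 l1 l2 l4 l3 l5 h

lemma s19_k33 : ¬ ContactB0VPG K33star := by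
  rintro ⟨R⟩
  rcases R.isSeg 0 with h | h
  · exact s19_k33_master R h
  · obtain ⟨x, a, b, hab, hS⟩ := h
    refine s19_k33_master R.transpose ⟨x, a, b, hab, ?_⟩
    show Prod.swap '' R.seg 0 = _
    rw [hS, s19_swap_col]

/-- The graphs `K₃,₃*` and `C̄₆` are not contact B₀-VPG. -/
theorem stmt_19 : ¬ ContactB0VPG K33star ∧ ¬ ContactB0VPG (cycleGraph 6)ᶜ := by
  exact ⟨s19_k33, s19_c6⟩
end
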